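/- arXiv:1412.7586 — 6 statements merged into one kernel-verified Lean document; each statement's English description precedes it below -/
import Mathlib

section
/- Let A be a finite nonempty subset of Z with min(A) = 0 and max(A) = p where p is prime, |A| ≥ 3. If |A+A| < 3|A| − 3, then the image of A+A under the quotient map φ_p : Z → Z_p satisfies |φ_p(A+A)| ≤ |A+A| − |A|. -/
open scoped Pointwise

theorem quotient_image_sumset_card (p : ℕ) (hp : p.Prime) (A : Finset ℤ)
    (hA : A.Nonempty) (hmin : A.min' hA = 0) (hmax : A.max' hA = (p : ℤ))
    (hcard : 3 ≤ A.card) (hsum : (A + A).card + 3 < 3 * A.card) :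
    ((A + A).image (Int.cast : ℤ → ZMod p)).card + A.card ≤ (A + A).card := by
  classical
  have h0 : (0 : ℤ) ∈ A := hmin ▸ A.min'_mem hA
  have hpA : ((p : ℤ)) ∈ A := hmax ▸ A.max'_mem hA
  set φ : ℤ → ZMod p := Int.cast with hφ
  set S := A + A with hS
  set M := S.image φ with hM
  have hAS : ∀ a ∈ A, a ∈ S := by
    intro a ha
    have := Finset.add_mem_add ha h0
    simpa using this
  have hApS : ∀ a ∈ A, a + (p : ℤ) ∈ S := fun a ha => Finset.add_mem_add ha hpA
  -- minimal representative of each fiber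
  let g : ZMod p → ℤ := fun m => if h : (S.filter (fun x => φ x = m)).Nonempty
    then (S.filter (fun x => φ x = m)).min' h else 0
  have hg : ∀ m ∈ M, g m ∈ S ∧ φ (g m) = m ∧ ∀ x ∈ S, φ x = m → g m ≤ x := by
    intro m hm
    obtain ⟨x, hx, hxm⟩ := Finset.mem_image.mp hm
    have hne : (S.filter (fun x => φ x = m)).Nonempty :=
      ⟨x, Finset.mem_filter.mpr ⟨hx, hxm⟩⟩
    have hmem := (S.filter (fun x => φ x = m)).min'_mem hne
    simp only [g, dif_pos hne]
    rw [Finset.mem_filter] at hmem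
    exact ⟨hmem.1, hmem.2, fun y hy hym =>
      Finset.min'_le _ y (Finset.mem_filter.mpr ⟨hy, hym⟩)⟩
  set R := M.image g with hR
  set B := A.image (· + (p : ℤ)) with hB
  have hRcard : R.card = M.card := by
    rw [hR]
    apply Finset.card_image_of_injOn
    intro m hm m' hm' hgg
    rw [← (hg m hm).2.1, ← (hg m' hm').2.1, hgg]
  have hBcard : B.card = A.card := by
    rw [hB]
    exact Finset.card_image_of_injective _ (add_left_injective _)
  have hRS : R ⊆ S := by
    intro x hx
    obtain ⟨m, hm, rfl⟩ := Finset.mem_image.mp hx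
    exact (hg m hm).1
  have hBS : B ⊆ S := by
    intro x hx
    obtain ⟨a, ha, rfl⟩ := Finset.mem_image.mp hx
    exact hApS a ha
  have hdisj : Disjoint R B := by
    rw [Finset.disjoint_right]
    intro x hxB hxR
    obtain ⟨a, ha, rfl⟩ := Finset.mem_image.mp hxB
    obtain ⟨m, hm, hgm⟩ := Finset.mem_image.mp hxR
    have hφa : φ a = m := by
      rw [← (hg m hm).2.1, hgm]
      simp [hφ]
    have hle : g m ≤ a := (hg m hm).2.2 a (hAS a ha) hφa
    have hp0 : (0 : ℤ) < p := by exact_mod_cast hp.pos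
    omega
  calc M.card + A.card = R.card + B.card := by rw [hRcard, hBcard]
    _ = (R ∪ B).card := (Finset.card_union_of_disjoint hdisj).symm
    _ ≤ S.card := Finset.card_le_card (Finset.union_subset hRS hBS)
end

section
/- Freiman-type theorem (special case of 3k−3): let A be a finite nonempty subset of Z with min(A) = 0 and max(A) = p, p prime. If |A+A| < 3|A| − 3, then |{0, 1, …, p} \ A| ≤ |A+A| − 2|A| + 1. -/
open scoped Pointwise

theorem freiman_3k3_special (p : ℕ) (hp : p.Prime) (A : Finset ℤ)
    (hA : A.Nonempty) (hmin : A.min' hA = 0) (hmax : A.max' hA = (p : ℤ))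
    (hsum : (A + A).card + 3 < 3 * A.card) :
    ((Finset.Icc (0 : ℤ) (p : ℤ)) \ A).card + 2 * A.card ≤ (A + A).card + 1 := by
  classical
  have hp0 : 0 < p := hp.pos
  haveI : NeZero p := ⟨hp0.ne'⟩
  have h0A : (0 : ℤ) ∈ A := hmin ▸ A.min'_mem hA
  have hpA : ((p : ℤ)) ∈ A := hmax ▸ A.max'_mem hA
  have h0p : (0 : ℤ) ≠ (p : ℤ) := by exact_mod_cast hp0.ne
  have hAIcc : A ⊆ Finset.Icc (0 : ℤ) (p : ℤ) := by
    intro x hx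
    simp only [Finset.mem_Icc]
    exact ⟨hmin ▸ A.min'_le x hx, hmax ▸ A.le_max' x hx⟩
  set B := A.erase (p : ℤ) with hBdef
  have h0B : (0 : ℤ) ∈ B := Finset.mem_erase.2 ⟨h0p, h0A⟩
  have hBIco : ∀ x ∈ B, 0 ≤ x ∧ x < (p : ℤ) := by
    intro x hx
    obtain ⟨hne, hxA⟩ := Finset.mem_erase.1 hx
    obtain ⟨h1, h2⟩ := Finset.mem_Icc.1 (hAIcc hxA)
    exact ⟨h1, lt_of_le_of_ne h2 hne⟩
  have hBcard : A.card = B.card + 1 := by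
    rw [hBdef, Finset.card_erase_of_mem hpA]
    have : 1 ≤ A.card := Finset.card_pos.2 hA
    omega
  -- the reduction map
  set f : ℤ →+* ZMod p := Int.castRingHom (ZMod p) with hfdef
  have hinj : ∀ x ∈ B, ∀ y ∈ B, f x = f y → x = y := by
    intro x hx y hy hxy
    obtain ⟨hx1, hx2⟩ := hBIco x hx
    obtain ⟨hy1, hy2⟩ := hBIco y hy
    have : x ≡ y [ZMOD (p : ℕ)] := (ZMod.intCast_eq_intCast_iff _ _ _).1 hxy
    have hmod : x % (p : ℤ) = y % (p : ℤ) := this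
    rwa [Int.emod_eq_of_lt hx1 hx2, Int.emod_eq_of_lt hy1 hy2] at hmod
  have hBimg : (B.image f).card = B.card := Finset.card_image_of_injOn hinj
  have hAimgB : A.image f = B.image f := by
    have : A = insert (p : ℤ) B := (Finset.insert_erase hpA).symm
    rw [this, Finset.image_insert]
    have hfp : f (p : ℤ) = 0 := by simp [hfdef]
    have h0img : (0 : ZMod p) ∈ B.image f := by
      refine Finset.mem_image.2 ⟨0, h0B, by simp [hfdef]⟩
    rw [hfp, Finset.insert_eq_self.2 h0img]
  -- the explicit subset T of A + A
  set S := A + A with hSdef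
  set T := (B ∪ B.image (· + (p : ℤ))) ∪ {2 * (p : ℤ)} with hTdef
  have hTS : T ⊆ S := by
    intro x hx
    simp only [hTdef, Finset.mem_union, Finset.mem_singleton, Finset.mem_image] at hx
    rcases hx with (hx | ⟨b, hb, rfl⟩) | rfl
    · have := Finset.add_mem_add (Finset.mem_of_mem_erase hx) h0A
      simpa using this
    · exact Finset.add_mem_add (Finset.mem_of_mem_erase hb) hpA
    · have := Finset.add_mem_add hpA hpA
      simpa [two_mul] using this
  have hBpcard : (B.image (· + (p : ℤ))).card = B.card :=
    Finset.card_image_of_injective _ (add_left_injective _)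
  have hdisj1 : Disjoint B (B.image (· + (p : ℤ))) := by
    rw [Finset.disjoint_left]
    intro x hx hx'
    obtain ⟨b, hb, rfl⟩ := Finset.mem_image.1 hx'
    have h1 := (hBIco _ hx).2
    have h2 := (hBIco b hb).1
    omega
  have hdisj2 : Disjoint (B ∪ B.image (· + (p : ℤ))) {2 * (p : ℤ)} := by
    rw [Finset.disjoint_right]
    intro x hx hx'
    simp only [Finset.mem_singleton] at hx
    subst hx
    rcases Finset.mem_union.1 hx' with h | h
    · have := (hBIco _ h).2; omega
    · obtain ⟨b, hb, hbe⟩ := Finset.mem_image.1 h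
      have h1 := (hBIco b hb).2
      omega
  have hTcard : T.card = 2 * B.card + 1 := by
    rw [hTdef, Finset.card_union_of_disjoint hdisj2,
      Finset.card_union_of_disjoint hdisj1, hBpcard, Finset.card_singleton]
    omega
  -- image of T equals image of B
  have hTimg : T.image f = B.image f := by
    apply Finset.Subset.antisymm
    · intro y hy
      obtain ⟨x, hx, rfl⟩ := Finset.mem_image.1 hy
      simp only [hTdef, Finset.mem_union, Finset.mem_singleton, Finset.mem_image] at hx
      rcases hx with (hx | ⟨b, hb, rfl⟩) | rfl
      · exact Finset.mem_image_of_mem f hx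
      · have : f (b + (p : ℤ)) = f b := by simp [hfdef]
        rw [this]; exact Finset.mem_image_of_mem f hb
      · have : f (2 * (p : ℤ)) = f 0 := by simp [hfdef]
        rw [this]; exact Finset.mem_image_of_mem f h0B
    · exact Finset.image_subset_image (by intro x hx; simp [hTdef, Finset.mem_union]; tauto)
  -- image of S is the sumset of images
  have hSimg : S.image f = A.image f + A.image f := Finset.image_add f
  -- counting: card (S.image f) ≤ card S - card T + card (T.image f)
  have hkey : (S.image f).card ≤ S.card - T.card + (T.image f).card := by
    have hsub : S.image f ⊆ (S \ T).image f ∪ T.image f := by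
      intro y hy
      obtain ⟨x, hx, rfl⟩ := Finset.mem_image.1 hy
      by_cases hxT : x ∈ T
      · exact Finset.mem_union_right _ (Finset.mem_image_of_mem f hxT)
      · exact Finset.mem_union_left _
          (Finset.mem_image_of_mem f (Finset.mem_sdiff.2 ⟨hx, hxT⟩))
    calc (S.image f).card ≤ ((S \ T).image f ∪ T.image f).card := Finset.card_le_card hsub
      _ ≤ ((S \ T).image f).card + (T.image f).card := Finset.card_union_le _ _
      _ ≤ (S \ T).card + (T.image f).card := by
          exact Nat.add_le_add_right (Finset.card_image_le) _
      _ = S.card - T.card + (T.image f).card := by rw [Finset.card_sdiff_of_subset hTS]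
  have hTleS : T.card ≤ S.card := Finset.card_le_card hTS
  -- Cauchy-Davenport
  have hBne : (B.image f).Nonempty := ⟨f 0, Finset.mem_image_of_mem f h0B⟩
  have hCD := ZMod.cauchy_davenport hp hBne hBne
  rw [← hAimgB, ← hSimg] at hCD
  rw [hTimg, hBimg] at hkey
  rw [hAimgB, hBimg] at hCD
  -- rule out the small branch of the min
  have hScard : A.card + p ≤ S.card := by
    rcases le_or_gt p (B.card + B.card - 1) with h | h
    · have := min_eq_left h ▸ hCD
      omega
    · have := min_eq_right h.le ▸ hCD
      -- then card (S.image f) ≥ 2 card B - 1, contradiction with hsum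
      have h2 : 2 ≤ A.card := Finset.one_lt_card.2 ⟨0, h0A, (p : ℤ), hpA, h0p⟩
      omega
  -- final arithmetic
  have hIcc : (Finset.Icc (0 : ℤ) (p : ℤ)).card = p + 1 := by
    rw [Int.card_Icc]
    simp
  have hsd : ((Finset.Icc (0 : ℤ) (p : ℤ)) \ A).card = p + 1 - A.card := by
    rw [Finset.card_sdiff_of_subset hAIcc, hIcc]
  have hAle : A.card ≤ p + 1 := hIcc ▸ Finset.card_le_card hAIcc
  omega
end

section
/- One-dimensional stability of sumsets: for any measurable set A ⊆ R, |A+A| − 2|A| ≥ min{|co(A) \ A|, |A|}, where |A+A| denotes outer Lebesgue measure if A+A is not measurable. -/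
open scoped Pointwise
open MeasureTheory Set Metric
open scoped ENNReal NNReal

namespace OneDimAux

lemma vadd_add_vadd' (a b : ℝ) (s t : Set ℝ) :
    (a +ᵥ s) + (b +ᵥ t) = (a + b) +ᵥ (s + t) := by
  ext x
  simp only [Set.mem_vadd_set, Set.mem_add, vadd_eq_add]
  constructor
  · rintro ⟨u, ⟨p, hp, rfl⟩, v, ⟨q, hq, rfl⟩, rfl⟩
    exact ⟨p + q, ⟨p, hp, q, hq, rfl⟩, by ring⟩
  · rintro ⟨y, ⟨p, hp, q, hq, rfl⟩, rfl⟩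
    exact ⟨a + p, ⟨p, hp, rfl⟩, b + q, ⟨q, hq, rfl⟩, by ring⟩

lemma compact_bound {a : ℝ} (ha : 0 < a) {A : Set ℝ} (hAc : IsCompact A)
    (hsub : A ⊆ Set.Icc 0 a) (h0 : (0:ℝ) ∈ A) (haA : a ∈ A) :
    min (ENNReal.ofReal a) (2 * volume A) + volume A ≤ volume (A + A) := by
  classical
  set C := A + A with hCdef
  have hCc : IsCompact C := hAc.add hAc
  have key : ∀ p : ℕ, p.Prime → ∀ δ : ℝ, 2 * (a / p) ≤ δ →
      min (ENNReal.ofReal a) (2 * volume A) + volume A ≤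
        volume (Metric.cthickening δ C) + ENNReal.ofReal (a / p) := by
    intro p hp δ hδ
    haveI : NeZero p := ⟨hp.pos.ne'⟩
    have hp0 : (0:ℝ) < p := by exact_mod_cast hp.pos
    set w : ℝ := a / p with hwdef
    have hw0 : 0 < w := div_pos ha hp0
    have hpne : (p : ℝ) ≠ 0 := hp0.ne'
    have hpw : (p : ℝ) * w = a := by rw [hwdef]; field_simp
    set T := Metric.cthickening δ C with hTdef
    have hTmeas : MeasurableSet T := Metric.isClosed_cthickening.measurableSet
    have hCT : C ⊆ T := Metric.self_subset_cthickening C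
    set Astar : Finset (ZMod p) :=
      Finset.univ.filter
        (fun j => (A ∩ Set.Ico ((j.val : ℝ) * w) ((j.val : ℝ) * w + w)).Nonempty) with hAstardef
    have hmemAstar : ∀ j : ZMod p, j ∈ Astar ↔
        (A ∩ Set.Ico ((j.val : ℝ) * w) ((j.val : ℝ) * w + w)).Nonempty := by
      intro j; rw [hAstardef]; simp [Finset.mem_filter]
    have h1 : volume A = volume (A ∩ Set.Ico 0 a) := by
      refine le_antisymm ?_ (measure_mono Set.inter_subset_left)
      have hsub2 : A ⊆ (A ∩ Set.Ico 0 a) ∪ {a} := by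
        intro x hx
        rcases hsub hx with ⟨h0x, hxa⟩
        rcases lt_or_eq_of_le hxa with h | h
        · exact Or.inl ⟨hx, h0x, h⟩
        · exact Or.inr (by simp [h])
      calc volume A ≤ volume ((A ∩ Set.Ico 0 a) ∪ {a}) := measure_mono hsub2
        _ ≤ volume (A ∩ Set.Ico 0 a) + volume ({a} : Set ℝ) := measure_union_le _ _
        _ = volume (A ∩ Set.Ico 0 a) := by simp
    have hAcover : volume A ≤ Astar.card * ENNReal.ofReal w := by
      have hcov : A ∩ Set.Ico 0 a ⊆
          ⋃ j ∈ Astar, Set.Ico ((j.val : ℝ) * w) ((j.val : ℝ) * w + w) := by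
        rintro x ⟨hxA, hx0, hxa⟩
        set n : ℕ := ⌊x / w⌋₊ with hn
        have hxw0 : 0 ≤ x / w := div_nonneg hx0 hw0.le
        have h1n : (n : ℝ) ≤ x / w := Nat.floor_le hxw0
        have h2n : x / w < n + 1 := Nat.lt_floor_add_one _
        have hnx : (n:ℝ) * w ≤ x := by
          have := (le_div_iff₀ hw0).mp h1n; linarith
        have hxn : x < (n:ℝ) * w + w := by
          have h := (div_lt_iff₀ hw0).mp h2n
          rw [add_mul, one_mul] at h; linarith
        have hnp : n < p := by
          refine (Nat.floor_lt hxw0).mpr ?_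
          rw [div_lt_iff₀ hw0]
          linarith
        have hval : ((n : ZMod p)).val = n := ZMod.val_cast_of_lt hnp
        refine Set.mem_biUnion ((hmemAstar (n : ZMod p)).mpr ⟨x, hxA, ?_⟩) ?_
        · rw [hval]; exact ⟨hnx, hxn⟩
        · rw [hval]; exact ⟨hnx, hxn⟩
      calc volume A = volume (A ∩ Set.Ico 0 a) := h1
        _ ≤ volume (⋃ j ∈ Astar, Set.Ico ((j.val : ℝ) * w) ((j.val : ℝ) * w + w)) :=
            measure_mono hcov
        _ ≤ ∑ j ∈ Astar, volume (Set.Ico ((j.val : ℝ) * w) ((j.val : ℝ) * w + w)) :=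
            measure_biUnion_finset_le _ _
        _ = ∑ _j ∈ Astar, ENNReal.ofReal w :=
            Finset.sum_congr rfl (fun j _ => by rw [Real.volume_Ico]; congr 1; ring)
        _ = Astar.card * ENNReal.ofReal w := by rw [Finset.sum_const, nsmul_eq_mul]
    have h0star : (0 : ZMod p) ∈ Astar := by
      refine (hmemAstar 0).mpr ⟨0, h0, ?_⟩
      simp [ZMod.val_zero, hw0]
    set S : Finset (ZMod p) := Astar + Astar with hSdef
    have hCD : min p (2 * Astar.card - 1) ≤ S.card := by
      have := ZMod.cauchy_davenport hp ⟨_, h0star⟩ ⟨_, h0star⟩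
      simpa [two_mul] using this
    set G0 : Set ℝ := T ∩ Set.Ico 0 a with hG0def
    set G1 : Set ℝ := (fun x => x + a) ⁻¹' (T ∩ Set.Ico a (2 * a)) with hG1def
    have hG0m : MeasurableSet G0 := hTmeas.inter measurableSet_Ico
    have hG1m : MeasurableSet G1 :=
      (hTmeas.inter measurableSet_Ico).preimage (measurable_add_const a)
    have hcell : ∀ s ∈ S, Set.Ico ((s.val : ℝ) * w) ((s.val : ℝ) * w + w) ⊆ G0 ∪ G1 := by
      intro s hs
      rw [hSdef, Finset.mem_add] at hs
      obtain ⟨j, hj, k, hk, rfl⟩ := hs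
      obtain ⟨a₁, ha₁A, ha₁l, ha₁r⟩ := (hmemAstar j).mp hj
      obtain ⟨a₂, ha₂A, ha₂l, ha₂r⟩ := (hmemAstar k).mp hk
      have hcC : a₁ + a₂ ∈ C := Set.add_mem_add ha₁A ha₂A
      have hjp : j.val < p := ZMod.val_lt j
      have hkp : k.val < p := ZMod.val_lt k
      have hskp : (j + k).val < p := ZMod.val_lt (j + k)
      have hsval : (j + k).val = (j.val + k.val) % p := ZMod.val_add j k
      have h2w : 2 * w ≤ δ := hδ
      intro x hx
      obtain ⟨hxl, hxr⟩ := hx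
      have hx0 : 0 ≤ x := le_trans (by positivity) hxl
      have hxa : x < a := by
        have h1p : ((j+k).val : ℝ) + 1 ≤ p := by exact_mod_cast hskp
        have h1p' := mul_le_mul_of_nonneg_right h1p hw0.le
        rw [add_mul, one_mul] at h1p'
        linarith
      by_cases hv : j.val + k.val < p
      · have hvv : (j + k).val = j.val + k.val := by rw [hsval, Nat.mod_eq_of_lt hv]
        left
        refine ⟨?_, hx0, hxa⟩
        refine Metric.mem_cthickening_of_dist_le x (a₁ + a₂) δ C hcC ?_
        have hcast : ((j + k).val : ℝ) = (j.val : ℝ) + (k.val : ℝ) := by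
          rw [hvv]; push_cast; ring
        have hmul : ((j + k).val : ℝ) * w = (j.val : ℝ) * w + (k.val : ℝ) * w := by
          rw [hcast]; ring
        rw [Real.dist_eq]
        have habs : |x - (a₁ + a₂)| ≤ 2 * w := by
          rw [abs_le]; constructor <;> linarith
        linarith
      · push_neg at hv
        have hmod : (j.val + k.val) % p = j.val + k.val - p := by
          rw [Nat.mod_eq_sub_mod hv, Nat.mod_eq_of_lt (by omega)]
        have hvv : (j + k).val + p = j.val + k.val := by rw [hsval, hmod]; omega
        right
        show x + a ∈ T ∩ Set.Ico a (2 * a)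
        refine ⟨?_, by linarith, by linarith⟩
        refine Metric.mem_cthickening_of_dist_le (x + a) (a₁ + a₂) δ C hcC ?_
        have hcast : ((j + k).val : ℝ) + p = (j.val : ℝ) + (k.val : ℝ) := by
          exact_mod_cast congrArg (fun t : ℕ => (t : ℝ)) hvv
        have hmul : ((j + k).val : ℝ) * w + a = (j.val : ℝ) * w + (k.val : ℝ) * w := by
          rw [← hpw, ← add_mul, hcast]; ring
        rw [Real.dist_eq]
        have habs : |x + a - (a₁ + a₂)| ≤ 2 * w := by
          rw [abs_le]; constructor <;> linarith
        linarith
    have hdisjcells : (S : Set (ZMod p)).PairwiseDisjoint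
        (fun s : ZMod p => Set.Ico ((s.val : ℝ) * w) ((s.val : ℝ) * w + w)) := by
      intro s _ t _ hst
      have hvne : s.val ≠ t.val := fun h => hst (ZMod.val_injective p h)
      have : ∀ u v : ZMod p, u.val < v.val →
          Disjoint (Set.Ico ((u.val : ℝ) * w) ((u.val : ℝ) * w + w))
            (Set.Ico ((v.val : ℝ) * w) ((v.val : ℝ) * w + w)) := by
        intro u v huv
        apply Set.disjoint_left.mpr
        rintro z ⟨hz1, hz2⟩ ⟨hz3, hz4⟩
        have h1 : (u.val : ℝ) + 1 ≤ v.val := by exact_mod_cast huv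
        have h1' := mul_le_mul_of_nonneg_right h1 hw0.le
        rw [add_mul, one_mul] at h1'
        linarith
      rcases lt_or_gt_of_ne hvne with h | h
      · exact this s t h
      · exact (this t s h).symm
    have hG01 : (S.card : ℝ≥0∞) * ENNReal.ofReal w ≤ volume (G0 ∪ G1) := by
      calc (S.card : ℝ≥0∞) * ENNReal.ofReal w
          = ∑ _s ∈ S, ENNReal.ofReal w := by rw [Finset.sum_const, nsmul_eq_mul]
        _ = ∑ s ∈ S, volume (Set.Ico ((s.val : ℝ) * w) ((s.val : ℝ) * w + w)) :=
            Finset.sum_congr rfl (fun j _ => by rw [Real.volume_Ico]; congr 1; ring)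
        _ = volume (⋃ s ∈ S, Set.Ico ((s.val : ℝ) * w) ((s.val : ℝ) * w + w)) :=
            (measure_biUnion_finset hdisjcells (fun _ _ => measurableSet_Ico)).symm
        _ ≤ volume (G0 ∪ G1) := measure_mono (Set.iUnion₂_subset hcell)
    have hAG : volume A ≤ volume (G0 ∩ G1) := by
      rw [h1]
      apply measure_mono
      rintro x ⟨hxA, hx0, hxa⟩
      refine ⟨⟨hCT ?_, hx0, hxa⟩, ?_⟩
      · simpa using Set.add_mem_add hxA h0
      · show x + a ∈ T ∩ Set.Ico a (2 * a)
        exact ⟨hCT (Set.add_mem_add hxA haA), by linarith, by linarith⟩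
    have hvolG1 : volume G1 = volume (T ∩ Set.Ico a (2 * a)) :=
      measure_preimage_add_right volume a _
    have hsplit : volume G0 + volume G1 ≤ volume T := by
      rw [hvolG1]
      have hdisj : Disjoint G0 (T ∩ Set.Ico a (2 * a)) := by
        apply Set.disjoint_left.mpr
        rintro x ⟨_, _, hx2⟩ ⟨_, hx3, _⟩
        linarith
      calc volume G0 + volume (T ∩ Set.Ico a (2 * a))
          = volume (G0 ∪ T ∩ Set.Ico a (2 * a)) :=
            (measure_union hdisj (hTmeas.inter measurableSet_Ico)).symm
        _ ≤ volume T := measure_mono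
            (Set.union_subset Set.inter_subset_left Set.inter_subset_left)
    have hmain : volume (G0 ∪ G1) + volume (G0 ∩ G1) ≤ volume T :=
      le_trans (le_of_eq (measure_union_add_inter G0 hG1m)) hsplit
    have hminw : min (ENNReal.ofReal a) (2 * volume A) ≤
        (S.card : ℝ≥0∞) * ENNReal.ofReal w + ENNReal.ofReal w := by
      rcases le_or_gt p (2 * Astar.card - 1) with h | h
      · refine le_trans (min_le_left _ _) ?_
        have hofa : ENNReal.ofReal a = (p : ℝ≥0∞) * ENNReal.ofReal w := by
          rw [← hpw, ENNReal.ofReal_mul (by positivity), ENNReal.ofReal_natCast]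
        rw [hofa]
        have hcard : (p : ℝ≥0∞) ≤ (S.card : ℝ≥0∞) := by
          exact_mod_cast (min_eq_left h ▸ hCD)
        exact le_trans (mul_le_mul_left hcard _) le_self_add
      · refine le_trans (min_le_right _ _) ?_
        have hcard1 : 1 ≤ Astar.card := Finset.card_pos.mpr ⟨0, h0star⟩
        have hle : (2 * Astar.card : ℕ) ≤ S.card + 1 := by
          have h2 := hCD
          rw [min_eq_right (by omega : 2 * Astar.card - 1 ≤ p)] at h2
          omega
        calc 2 * volume A ≤ 2 * ((Astar.card : ℝ≥0∞) * ENNReal.ofReal w) :=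
              mul_le_mul_right hAcover 2
          _ = ((2 * Astar.card : ℕ) : ℝ≥0∞) * ENNReal.ofReal w := by push_cast; ring
          _ ≤ ((S.card + 1 : ℕ) : ℝ≥0∞) * ENNReal.ofReal w :=
              mul_le_mul_left (by exact_mod_cast hle) _
          _ = (S.card : ℝ≥0∞) * ENNReal.ofReal w + ENNReal.ofReal w := by push_cast; ring
    calc min (ENNReal.ofReal a) (2 * volume A) + volume A
        ≤ ((S.card : ℝ≥0∞) * ENNReal.ofReal w + ENNReal.ofReal w) + volume A :=
          add_le_add_left hminw _
      _ = ((S.card : ℝ≥0∞) * ENNReal.ofReal w + volume A) + ENNReal.ofReal w := by ring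
      _ ≤ (volume (G0 ∪ G1) + volume (G0 ∩ G1)) + ENNReal.ofReal w :=
          add_le_add_left (add_le_add hG01 hAG) _
      _ ≤ volume T + ENNReal.ofReal w := add_le_add hmain le_rfl
  refine ENNReal.le_of_forall_pos_le_add ?_
  intro ε hε hfin
  have htend := tendsto_measure_cthickening_of_isCompact (μ := volume) hCc
  have hlt : volume C < volume C + (ε : ℝ≥0∞) / 2 := by
    refine ENNReal.lt_add_right hfin.ne ?_
    simp [ENNReal.div_eq_zero_iff, hε.ne']
  have hev : ∀ᶠ r in nhds (0:ℝ), volume (Metric.cthickening r C) < volume C + (ε : ℝ≥0∞) / 2 :=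
    htend.eventually_lt_const hlt
  rw [Metric.eventually_nhds_iff] at hev
  obtain ⟨δ₀, hδ₀, hball⟩ := hev
  have hεR : (0:ℝ) < ε := hε
  obtain ⟨n, hn⟩ := exists_nat_gt (max (4 * a / δ₀) (2 * a / (ε : ℝ)))
  obtain ⟨p, hpn, hp⟩ := Nat.exists_infinite_primes (n + 1)
  have hpR : max (4 * a / δ₀) (2 * a / (ε : ℝ)) < p := by
    refine lt_of_lt_of_le hn ?_
    exact_mod_cast by omega
  have hp0 : (0:ℝ) < p := by
    have h4 : (0:ℝ) < 4 * a / δ₀ := by positivity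
    have := le_max_left (4 * a / δ₀) (2 * a / (ε : ℝ))
    linarith
  have hap1 : a / p < δ₀ / 4 := by
    have h1 : 4 * a / δ₀ < p := lt_of_le_of_lt (le_max_left _ _) hpR
    rw [div_lt_div_iff₀ hp0 (by norm_num)]
    rw [div_lt_iff₀ hδ₀] at h1
    nlinarith
  have hap2 : a / p < (ε : ℝ) / 2 := by
    have h1 : 2 * a / (ε : ℝ) < p := lt_of_le_of_lt (le_max_right _ _) hpR
    rw [div_lt_div_iff₀ hp0 (by norm_num)]
    rw [div_lt_iff₀ hεR] at h1
    nlinarith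
  have hkey := key p hp (2 * (a / p)) le_rfl
  have hdist : dist (2 * (a / p)) 0 < δ₀ := by
    rw [Real.dist_eq, sub_zero, abs_of_nonneg (by positivity)]
    linarith
  have hofw : ENNReal.ofReal (a / p) ≤ (ε : ℝ≥0∞) / 2 := by
    have h1 : ENNReal.ofReal (a / p) ≤ ENNReal.ofReal ((ε : ℝ) / 2) :=
      ENNReal.ofReal_le_ofReal hap2.le
    have h2 : ENNReal.ofReal ((ε : ℝ) / 2) = (ε : ℝ≥0∞) / 2 := by
      rw [ENNReal.ofReal_div_of_pos (by norm_num), ENNReal.ofReal_coe_nnreal,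
        ENNReal.ofReal_ofNat]
    rwa [h2] at h1
  calc min (ENNReal.ofReal a) (2 * volume A) + volume A
      ≤ volume (Metric.cthickening (2 * (a / p)) C) + ENNReal.ofReal (a / p) := hkey
    _ ≤ (volume C + (ε : ℝ≥0∞) / 2) + (ε : ℝ≥0∞) / 2 :=
        add_le_add (le_of_lt (hball hdist)) hofw
    _ = volume C + (ε : ℝ≥0∞) := by rw [add_assoc, ENNReal.add_halves]

end OneDimAux

theorem one_dim_sumset_stability (A : Set ℝ) (hA : MeasurableSet A) :
    min (volume (convexHull ℝ A \ A)) (volume A) + 2 * volume A ≤ volume (A + A) := by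
  classical
  rcases eq_or_ne (volume A) 0 with hz | hz
  · have h1 : min (volume (convexHull ℝ A \ A)) (volume A) = 0 :=
      le_antisymm (le_trans (min_le_right _ _) (le_of_eq hz)) zero_le
    rw [h1, hz]
    simp
  rcases eq_or_ne (volume A) ⊤ with htop | htop
  · obtain ⟨x, hx⟩ : A.Nonempty := nonempty_of_measure_ne_zero hz
    have hvAA : volume (A + A) = ⊤ := by
      rw [eq_top_iff, ← htop]
      calc volume A = volume (x +ᵥ A) := (measure_vadd volume x A).symm
        _ ≤ volume (A + A) := by
            apply measure_mono
            rintro z ⟨y, hy, rfl⟩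
            exact Set.add_mem_add hx hy
    rw [hvAA]; exact le_top
  -- main case
  set m := volume A with hm
  have hAne : A.Nonempty := nonempty_of_measure_ne_zero hz
  have hlhs : min (volume (convexHull ℝ A \ A)) m + 2 * m
      = min (volume (convexHull ℝ A) + m) (3 * m) := by
    have hco : volume (convexHull ℝ A) = volume (convexHull ℝ A \ A) + m := by
      rw [← measure_diff_add_inter (convexHull ℝ A) hA,
        Set.inter_eq_right.mpr (subset_convexHull ℝ A)]
    rw [hco, ← min_add_add_right]
    congr 1 <;> ring
  rw [hlhs]
  refine le_of_forall_lt_imp_le_of_dense ?_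
  intro c hc
  have h3top : (3 : ℝ≥0∞) * m ≠ ⊤ := ENNReal.mul_ne_top (by norm_num) htop
  have hc3 : c < 3 * m := lt_of_lt_of_le hc (min_le_right _ _)
  have hc1 : c < volume (convexHull ℝ A) + m := lt_of_lt_of_le hc (min_le_left _ _)
  rcases eq_or_ne c 0 with rfl | hc0
  · exact zero_le
  have hcfin : c ≠ ⊤ := ne_top_of_lt hc3
  set creal := c.toReal with hcreal
  set mreal := m.toReal with hmreal
  have hcreal0 : 0 ≤ creal := ENNReal.toReal_nonneg
  have hmreal0 : 0 < mreal := ENNReal.toReal_pos hz htop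
  have hc3R : creal < 3 * mreal := by
    have h := (ENNReal.toReal_lt_toReal hcfin h3top).mpr hc3
    rwa [ENNReal.toReal_mul, ENNReal.toReal_ofNat] at h
  set d2 := 3 * mreal - creal with hd2
  have hd2pos : 0 < d2 := by rw [hd2]; linarith
  have hchoice : ∃ η : ℝ, 0 < η ∧ creal + 3 * η ≤ 3 * mreal ∧
      ∃ x ∈ A, ∃ y ∈ A, creal + 3 * η ≤ (y - x) + mreal := by
    by_cases hba : BddAbove A
    · by_cases hbb : BddBelow A
      · -- bounded case
        set u := sInf A with hu
        set v := sSup A with hv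
        obtain ⟨x₀, hx₀⟩ := hAne
        have huv : u ≤ v := le_trans (csInf_le hbb hx₀) (le_csSup hba hx₀)
        have hcoIcc : convexHull ℝ A ⊆ Set.Icc u v :=
          convexHull_min (fun z hz => ⟨csInf_le hbb hz, le_csSup hba hz⟩) (convex_Icc u v)
        have hμco_le : volume (convexHull ℝ A) ≤ ENNReal.ofReal (v - u) := by
          refine le_trans (measure_mono hcoIcc) ?_
          rw [Real.volume_Icc]
        have hc1' : c < ENNReal.ofReal (v - u) + m :=
          lt_of_lt_of_le hc1 (add_le_add_left hμco_le m)
        have hfin' : ENNReal.ofReal (v - u) + m ≠ ⊤ :=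
          ENNReal.add_ne_top.mpr ⟨ENNReal.ofReal_ne_top, htop⟩
        have hc1R : creal < (v - u) + mreal := by
          have h := (ENNReal.toReal_lt_toReal hcfin hfin').mpr hc1'
          rwa [ENNReal.toReal_add ENNReal.ofReal_ne_top htop,
            ENNReal.toReal_ofReal (by linarith)] at h
        set d1 := (v - u) + mreal - creal with hd1
        have hd1pos : 0 < d1 := by rw [hd1]; linarith
        set η := min d1 d2 / 8 with hη
        have hηpos : 0 < η := div_pos (lt_min hd1pos hd2pos) (by norm_num)
        have hη1 : 8 * η ≤ d1 := by
          have h := min_le_left d1 d2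
          rw [hη]; linarith
        have hη2 : 8 * η ≤ d2 := by
          have h := min_le_right d1 d2
          rw [hη]; linarith
        obtain ⟨x, hxA, hxlt⟩ := Real.lt_sInf_add_pos ⟨x₀, hx₀⟩ hηpos
        obtain ⟨y, hyA, hylt⟩ := Real.add_neg_lt_sSup ⟨x₀, hx₀⟩ (neg_lt_zero.mpr hηpos)
        refine ⟨η, hηpos, by rw [hd2] at hη2; linarith, x, hxA, y, hyA, ?_⟩
        have hxu : x < u + η := hxlt
        have hyv : v - η < y := by
          have := hylt; linarith
        rw [hd1] at hη1
        linarith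
      · -- unbounded below
        obtain ⟨y₀, hy₀⟩ := hAne
        set η := d2 / 8 with hη
        have hηpos : 0 < η := by rw [hη]; positivity
        obtain ⟨x, hxA, hxlt⟩ := not_bddBelow_iff.mp hbb (y₀ - (creal + 3 * η))
        refine ⟨η, hηpos, by rw [hη, hd2]; linarith, x, hxA, y₀, hy₀, by linarith⟩
    · -- unbounded above
      obtain ⟨x₀, hx₀⟩ := hAne
      set η := d2 / 8 with hη
      have hηpos : 0 < η := by rw [hη]; positivity
      obtain ⟨y, hyA, hylt⟩ := not_bddAbove_iff.mp hba (x₀ + (creal + 3 * η))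
      refine ⟨η, hηpos, by rw [hη, hd2]; linarith, x₀, hx₀, y, hyA, by linarith⟩
  obtain ⟨η, hηpos, h3mR, x, hxA, y, hyA, hxyR⟩ := hchoice
  set t := ENNReal.ofReal η with ht
  have ht0 : t ≠ 0 := by
    rw [ht]; simp [ENNReal.ofReal_eq_zero]; linarith
  have httop : t ≠ ⊤ := ENNReal.ofReal_ne_top
  obtain ⟨K₀, hK₀A, hK₀c, hK₀m⟩ := hA.exists_isCompact_lt_add htop (ε := t) ht0
  set K := insert x (insert y K₀) with hK
  have hKc : IsCompact K := ((hK₀c.insert y).insert x)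
  have hKA : K ⊆ A := by
    rw [hK, Set.insert_subset_iff, Set.insert_subset_iff]
    exact ⟨hxA, hyA, hK₀A⟩
  have hKne : K.Nonempty := ⟨x, Set.mem_insert _ _⟩
  set α := sInf K with hα
  set β := sSup K with hβ
  have hαK : α ∈ K := hKc.sInf_mem hKne
  have hβK : β ∈ K := hKc.sSup_mem hKne
  have hKIcc : K ⊆ Set.Icc α β :=
    fun z hz => ⟨csInf_le hKc.bddBelow hz, le_csSup hKc.bddAbove hz⟩
  have hxα : α ≤ x := csInf_le hKc.bddBelow (Set.mem_insert _ _)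
  have hyβ : y ≤ β := le_csSup hKc.bddAbove
    (by rw [hK]; exact Set.mem_insert_of_mem _ (Set.mem_insert _ _))
  have hαβ : α ≤ β := le_trans hxα (hKIcc (Set.mem_insert _ _)).2
  have hμK : m ≤ volume K + t := by
    refine le_trans hK₀m.le (add_le_add_left (measure_mono ?_) _)
    rw [hK]
    exact (Set.subset_insert _ _).trans (Set.subset_insert _ _)
  have hμKm : volume K ≤ m := measure_mono hKA
  have hcENN : c = ENNReal.ofReal creal := (ENNReal.ofReal_toReal hcfin).symm
  have hmENN : m = ENNReal.ofReal mreal := (ENNReal.ofReal_toReal htop).symm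
  have h3t : (3 : ℝ≥0∞) * t = ENNReal.ofReal (3 * η) := by
    rw [ht, ENNReal.ofReal_mul (by norm_num), ENNReal.ofReal_ofNat]
  have h3ttop : (3 : ℝ≥0∞) * t ≠ ⊤ := ENNReal.mul_ne_top (by norm_num) httop
  have h3m' : (3 : ℝ≥0∞) * m = ENNReal.ofReal (3 * mreal) := by
    rw [hmENN, ENNReal.ofReal_mul (by norm_num), ENNReal.ofReal_ofNat]
  have hkey1 : c + 3 * t ≤ 3 * m := by
    rw [hcENN, h3t, h3m', ← ENNReal.ofReal_add hcreal0 (by positivity)]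
    exact ENNReal.ofReal_le_ofReal h3mR
  have hkey2 : (3 : ℝ≥0∞) * m ≤ 3 * volume K + 3 * t := by
    calc (3 : ℝ≥0∞) * m ≤ 3 * (volume K + t) := mul_le_mul_right hμK 3
      _ = 3 * volume K + 3 * t := by ring
  have hc3K : c ≤ 3 * volume K :=
    (ENNReal.add_le_add_iff_right h3ttop).mp (le_trans hkey1 hkey2)
  have hyx : y - x ≤ β - α := by linarith
  have hW : c ≤ ENNReal.ofReal (β - α) + volume K := by
    have hstep1 : c + 3 * t ≤ ENNReal.ofReal (β - α) + m := by
      rw [hcENN, h3t, hmENN, ← ENNReal.ofReal_add hcreal0 (by positivity),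
        ← ENNReal.ofReal_add (by linarith) hmreal0.le]
      exact ENNReal.ofReal_le_ofReal (by linarith)
    have ht3 : t ≤ 3 * t := by
      calc t = 1 * t := (one_mul t).symm
        _ ≤ 3 * t := mul_le_mul_left (by norm_num) t
    have hstep2 : ENNReal.ofReal (β - α) + m ≤ (ENNReal.ofReal (β - α) + volume K) + 3 * t := by
      calc ENNReal.ofReal (β - α) + m ≤ ENNReal.ofReal (β - α) + (volume K + t) :=
            add_le_add_right hμK _
        _ ≤ ENNReal.ofReal (β - α) + (volume K + 3 * t) :=
            add_le_add_right (add_le_add_right ht3 _) _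
        _ = (ENNReal.ofReal (β - α) + volume K) + 3 * t := by ring
    exact (ENNReal.add_le_add_iff_right h3ttop).mp (le_trans hstep1 hstep2)
  have hVK0 : volume K ≠ 0 := by
    intro h
    rw [h, mul_zero] at hc3K
    exact hc0 (le_antisymm hc3K zero_le)
  have hW0 : 0 < β - α := by
    by_contra h
    push_neg at h
    have hle : volume K ≤ ENNReal.ofReal (β - α) := by
      refine le_trans (measure_mono hKIcc) ?_
      rw [Real.volume_Icc]
    rw [ENNReal.ofReal_eq_zero.mpr h] at hle
    exact hVK0 (le_antisymm hle zero_le)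
  set B := (-α) +ᵥ K with hB
  have hBc : IsCompact B := by
    rw [hB, ← Set.image_vadd]
    exact hKc.image (continuous_add_left (-α))
  have hBsub : B ⊆ Set.Icc 0 (β - α) := by
    rintro b hb
    rw [hB, Set.mem_vadd_set] at hb
    obtain ⟨z, hz, rfl⟩ := hb
    obtain ⟨h1, h2⟩ := hKIcc hz
    simp only [vadd_eq_add]
    constructor <;> linarith
  have h0B : (0 : ℝ) ∈ B := by
    rw [hB, Set.mem_vadd_set]
    exact ⟨α, hαK, by simp⟩
  have hβB : β - α ∈ B := by
    rw [hB, Set.mem_vadd_set]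
    exact ⟨β, hβK, by rw [vadd_eq_add]; ring⟩
  have hvolB : volume B = volume K := by rw [hB]; exact measure_vadd volume _ _
  have hBBvol : volume (B + B) = volume (K + K) := by
    rw [hB, OneDimAux.vadd_add_vadd']
    exact measure_vadd volume _ _
  have hcomp := OneDimAux.compact_bound hW0 hBc hBsub h0B hβB
  have hfinal : c ≤ min (ENNReal.ofReal (β - α)) (2 * volume B) + volume B := by
    rw [hvolB, ← min_add_add_right]
    refine le_min hW ?_
    calc c ≤ 3 * volume K := hc3K
      _ = 2 * volume K + volume K := by ring
  calc c ≤ min (ENNReal.ofReal (β - α)) (2 * volume B) + volume B := hfinal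
    _ ≤ volume (B + B) := hcomp
    _ = volume (K + K) := hBBvol
    _ ≤ volume (A + A) := measure_mono (Set.add_subset_add hKA hKA)
end

section
/- For a nonempty measurable set A ⊆ R^n with finite deficit δ(A) < ∞, every fiber length is uniformly bounded: sup_{y ∈ R^{n−1}} H^1(A_y) < ∞, where A_y := A ∩ π^{−1}(y) and π : R^n → R^{n−1} is the projection onto the first n−1 coordinates. -/
open scoped Pointwise
open MeasureTheory
open scoped ENNReal

theorem fiber_length_bounded (m : ℕ) (A : Set ((Fin m → ℝ) × ℝ))
    (hA : MeasurableSet A) (hne : A.Nonempty)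
    (hpos : 0 < volume A) (hfin : volume A < ⊤) (hsum : volume (A + A) < ⊤) :
    (⨆ y : Fin m → ℝ, volume {t : ℝ | (y, t) ∈ A}) < ⊤ := by
  set f : (Fin m → ℝ) → ℝ≥0∞ := fun y => volume (Prod.mk y ⁻¹' A) with hf
  have hfmeas : Measurable f := measurable_measure_prodMk_left hA
  have hApf : volume A = ∫⁻ y, f y := by
    rw [MeasureTheory.Measure.volume_eq_prod, Measure.prod_apply hA]
  set S : Set (Fin m → ℝ) := {y | 0 < f y} with hS
  have hSmeas : MeasurableSet S := measurableSet_lt measurable_const hfmeas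
  have hSpos : 0 < volume S := by
    rcases (zero_le : 0 ≤ volume S).lt_or_eq with h | h
    · exact h
    · exfalso
      have : ∫⁻ y, f y = 0 := by
        rw [lintegral_eq_zero_iff hfmeas]
        refine Filter.eventuallyEq_of_mem (s := Sᶜ) ?_ ?_
        · rw [MeasureTheory.mem_ae_iff, compl_compl]; exact h.symm
        · intro y hy
          simpa [hS, pos_iff_ne_zero] using hy
      rw [hApf, this] at hpos
      exact lt_irrefl _ hpos
  -- measurable hull of A + A
  obtain ⟨T, hsub, hT, hTvol⟩ := exists_measurable_superset volume (A + A)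
  set g : (Fin m → ℝ) → ℝ≥0∞ := fun y => volume (Prod.mk y ⁻¹' T) with hg
  have hgmeas : Measurable g := measurable_measure_prodMk_left hT
  have hTpf : volume T = ∫⁻ y, g y := by
    rw [MeasureTheory.Measure.volume_eq_prod, Measure.prod_apply hT]
  -- key inequality: f y * volume S ≤ volume T, for each y
  have key : ∀ y : Fin m → ℝ, f y * volume S ≤ volume T := by
    intro y
    have step : ∀ z ∈ (fun y' => y + y') '' S, f y ≤ g z := by
      rintro z ⟨y', hy', rfl⟩
      have hne' : (Prod.mk y' ⁻¹' A).Nonempty :=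
        MeasureTheory.nonempty_of_measure_ne_zero (pos_iff_ne_zero.mp hy')
      obtain ⟨t', ht'⟩ := hne'
      -- the fiber of T at y + y' contains A_y + t'
      have hsub2 : (fun t => t + t') ⁻¹' (Prod.mk (y + y') ⁻¹' T) ⊇ Prod.mk y ⁻¹' A := by
        intro t ht
        have : (y + y', t + t') ∈ A + A := ⟨(y, t), ht, (y', t'), ht', rfl⟩
        exact hsub this
      calc f y = volume ((fun t => t + t') ⁻¹' (Prod.mk (y + y') ⁻¹' T) ∩ Prod.mk y ⁻¹' A) := by
            rw [Set.inter_eq_right.mpr hsub2]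
        _ ≤ volume ((fun t => t + t') ⁻¹' (Prod.mk (y + y') ⁻¹' T)) :=
            measure_mono Set.inter_subset_left
        _ = g (y + y') := measure_preimage_add_right volume t' _
    have himg : volume ((fun y' => y + y') '' S) = volume S := by
      have : (fun y' => y + y') '' S = (fun y' => (-y) + y') ⁻¹' S := by
        ext z; constructor
        · rintro ⟨y', hy', rfl⟩; simpa using hy'
        · intro hz; exact ⟨-y + z, hz, by simp⟩
      rw [this, measure_preimage_add]
    calc f y * volume S = f y * volume ((fun y' => y + y') '' S) := by rw [himg]
      _ = ∫⁻ z in (fun y' => y + y') '' S, f y := by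
          rw [setLIntegral_const, mul_comm]
      _ ≤ ∫⁻ z in (fun y' => y + y') '' S, g z := by
          refine setLIntegral_mono hgmeas ?_
          exact step
      _ ≤ ∫⁻ z, g z := setLIntegral_le_lintegral _ _
      _ = volume T := hTpf.symm
  have hTfin : volume T < ⊤ := by rw [hTvol]; exact hsum
  have hbound : ∀ y, f y ≤ volume T / volume S := by
    intro y
    rw [ENNReal.le_div_iff_mul_le (Or.inl hSpos.ne') (Or.inr hTfin.ne)]
    exact key y
  have : (⨆ y : Fin m → ℝ, f y) ≤ volume T / volume S := iSup_le hbound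
  refine lt_of_le_of_lt ?_ (lt_of_le_of_lt this ?_)
  · apply le_of_eq
    congr 1
  · exact ENNReal.div_lt_top hTfin.ne hSpos.ne'
end

section
/- Almost-affine boundedness lemma: let E ⊆ [m1, m2] ⊆ R with m1, m2, (m1+m2)/2 ∈ E and |E| ≥ (1−ε)(m2−m1), and let f : E → R be bounded measurable satisfying |(f(m')+f(m''))/2 − f((m'+m'')/2)| ≤ 1 whenever m', m'', (m'+m'')/2 ∈ E. Then, provided ε is smaller than a universal constant, there exist a linear (affine) function ℓ : [m1, m2] → R and a universal constant M such that |f − ℓ| ≤ M on E. -/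
set_option maxHeartbeats 1000000
open MeasureTheory

lemma vol_preimage_affine_le (p q c eL : ℝ) (hp : p ≠ 0) (hc : |p⁻¹| ≤ c)
    (N : Set ℝ) (hvol : volume N ≤ ENNReal.ofReal eL) :
    volume ((fun y => p * y + q) ⁻¹' N) ≤ ENNReal.ofReal (c * eL) := by
  have h1 : (fun y : ℝ => p * y + q) ⁻¹' N = (p * ·) ⁻¹' ((fun h => h + q) ⁻¹' N) := rfl
  rw [h1, Real.volume_preimage_mul_left hp, measure_preimage_add_right,
    ENNReal.ofReal_mul (le_trans (abs_nonneg _) hc)]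
  exact mul_le_mul' (ENNReal.ofReal_le_ofReal hc) hvol

lemma pick_helper (α β eL : ℝ) (B₁ B₂ B₃ B₄ : Set ℝ)
    (h1 : volume B₁ ≤ ENNReal.ofReal eL) (h2 : volume B₂ ≤ ENNReal.ofReal eL)
    (h3 : volume B₃ ≤ ENNReal.ofReal eL) (h4 : volume B₄ ≤ ENNReal.ofReal (2*eL))
    (heL : 0 ≤ eL) (hlen : 5 * eL < β - α) :
    ∃ y ∈ Set.Icc α β, y ∉ B₁ ∧ y ∉ B₂ ∧ y ∉ B₃ ∧ y ∉ B₄ := by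
  by_contra hcon
  push_neg at hcon
  have hsub : Set.Icc α β ⊆ B₁ ∪ (B₂ ∪ (B₃ ∪ B₄)) := by
    intro y hy
    by_cases hb1 : y ∈ B₁
    · exact Set.mem_union_left _ hb1
    by_cases hb2 : y ∈ B₂
    · exact Set.mem_union_right _ (Set.mem_union_left _ hb2)
    by_cases hb3 : y ∈ B₃
    · exact Set.mem_union_right _ (Set.mem_union_right _ (Set.mem_union_left _ hb3))
    · exact Set.mem_union_right _ (Set.mem_union_right _ (Set.mem_union_right _
        (hcon y hy hb1 hb2 hb3)))
  have hm : ENNReal.ofReal (β - α) ≤ ENNReal.ofReal (eL + (eL + (eL + 2*eL))) := by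
    calc ENNReal.ofReal (β - α) = volume (Set.Icc α β) := (Real.volume_Icc).symm
    _ ≤ volume (B₁ ∪ (B₂ ∪ (B₃ ∪ B₄))) := measure_mono hsub
    _ ≤ volume B₁ + (volume B₂ + (volume B₃ + volume B₄)) := by
        refine le_trans (measure_union_le _ _) ?_
        refine add_le_add le_rfl (le_trans (measure_union_le _ _) ?_)
        exact add_le_add le_rfl (measure_union_le _ _)
    _ ≤ ENNReal.ofReal (eL + (eL + (eL + 2*eL))) := by
        rw [ENNReal.ofReal_add heL (by linarith), ENNReal.ofReal_add heL (by linarith),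
          ENNReal.ofReal_add heL (by linarith)]
        exact add_le_add h1 (add_le_add h2 (add_le_add h3 h4))
  have := (ENNReal.ofReal_le_ofReal_iff (by linarith)).mp hm
  linarith

/-- from |g a| = 0 anchor triple: |g y| ≤ |g y'|/2 + 1 -/
lemma anchor_bound (g : ℝ → ℝ) (a y' : ℝ) (h : |(g a + g y') / 2 - g ((a + y') / 2)| ≤ 1)
    (hga : g a = 0) : |g ((a + y') / 2)| ≤ |g y'| / 2 + 1 := by
  rw [hga] at h
  rcases abs_le.mp h with ⟨h1, h2⟩
  have := le_abs_self (g y')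
  have := neg_abs_le (g y')
  exact abs_le.mpr ⟨by linarith, by linarith⟩

lemma window_step (m₁ m₂ eL α β x a₁ a₂ d₁ d₂ : ℝ) (E : Set ℝ) (g : ℝ → ℝ)
    (hEsub : E ⊆ Set.Icc m₁ m₂)
    (hN : volume (Set.Icc m₁ m₂ \ E) ≤ ENNReal.ofReal eL)
    (hmid : ∀ u v, u ∈ E → v ∈ E → (u + v) / 2 ∈ E → |(g u + g v) / 2 - g ((u + v) / 2)| ≤ 1)
    (ha₁ : a₁ ∈ E) (ha₂ : a₂ ∈ E) (hg₁ : g a₁ = 0) (hg₂ : g a₂ = 0)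
    (hx : x ∈ E) (heL : 0 ≤ eL) (hlen : 5 * eL < β - α)
    (hgeom : ∀ y ∈ Set.Icc α β, y ∈ Set.Icc m₁ m₂ ∧ 2 * x - y ∈ Set.Icc m₁ m₂ ∧
      2 * y - a₁ ∈ Set.Icc d₁ d₂ ∧ 2 * (2 * x - y) - a₂ ∈ Set.Icc d₁ d₂)
    (hD : Set.Icc d₁ d₂ ⊆ Set.Icc m₁ m₂) :
    ∃ y' z', (y' ∈ E ∧ y' ∈ Set.Icc d₁ d₂) ∧ (z' ∈ E ∧ z' ∈ Set.Icc d₁ d₂) ∧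
      |g x| ≤ |g y'| / 4 + |g z'| / 4 + 2 := by
  set N := Set.Icc m₁ m₂ \ E with hNdef
  have hv2 : volume ((fun y => (-1) * y + 2 * x) ⁻¹' N) ≤ ENNReal.ofReal eL := by
    simpa using vol_preimage_affine_le (-1) (2*x) 1 eL (by norm_num) (by norm_num) N hN
  have hv3 : volume ((fun y => 2 * y + (-a₁)) ⁻¹' N) ≤ ENNReal.ofReal eL := by
    have := vol_preimage_affine_le 2 (-a₁) 1 eL (by norm_num)
      (by rw [abs_of_nonneg (by norm_num : (0:ℝ) ≤ (2:ℝ)⁻¹)]; norm_num) N hN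
    simpa using this
  have hv4 : volume ((fun y => (-2) * y + (4 * x - a₂)) ⁻¹' N) ≤ ENNReal.ofReal (2 * eL) := by
    have : |((-2:ℝ))⁻¹| ≤ 2 := by rw [abs_of_nonpos (by norm_num : ((-2:ℝ))⁻¹ ≤ 0)]; norm_num
    exact vol_preimage_affine_le (-2) (4*x - a₂) 2 eL (by norm_num) this N hN
  obtain ⟨y, hyJ, hb1, hb2, hb3, hb4⟩ := pick_helper α β eL N
    ((fun y => (-1) * y + 2 * x) ⁻¹' N) ((fun y => 2 * y + (-a₁)) ⁻¹' N)
    ((fun y => (-2) * y + (4 * x - a₂)) ⁻¹' N)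
    hN hv2 hv3 hv4 heL hlen
  obtain ⟨hy1, hy2, hy3, hy4⟩ := hgeom y hyJ
  -- memberships in E
  have hyE : y ∈ E := by
    by_contra h; exact hb1 ⟨hy1, h⟩
  have hzE : 2 * x - y ∈ E := by
    by_contra h
    exact hb2 (by simpa using (show (-1) * y + 2 * x ∈ N from by
      have : (-1) * y + 2 * x = 2 * x - y := by ring
      rw [this]; exact ⟨hy2, h⟩))
  have hy'E : 2 * y - a₁ ∈ E := by
    by_contra h
    exact hb3 (show 2 * y + (-a₁) ∈ N from by
      have : 2 * y + (-a₁) = 2 * y - a₁ := by ring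
      rw [this]; exact ⟨hD hy3, h⟩)
  have hz'E : 2 * (2 * x - y) - a₂ ∈ E := by
    by_contra h
    exact hb4 (show (-2) * y + (4 * x - a₂) ∈ N from by
      have : (-2) * y + (4 * x - a₂) = 2 * (2 * x - y) - a₂ := by ring
      rw [this]; exact ⟨hD hy4, h⟩)
  refine ⟨2 * y - a₁, 2 * (2 * x - y) - a₂, ⟨hy'E, hy3⟩, ⟨hz'E, hy4⟩, ?_⟩
  -- main estimate
  have t1 : |(g y + g (2 * x - y)) / 2 - g x| ≤ 1 := by
    have hmE : (y + (2 * x - y)) / 2 ∈ E := by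
      have : (y + (2 * x - y)) / 2 = x := by ring
      rw [this]; exact hx
    have := hmid y (2 * x - y) hyE hzE hmE
    have he : (y + (2 * x - y)) / 2 = x := by ring
    rwa [he] at this
  have t2 : |g y| ≤ |g (2 * y - a₁)| / 2 + 1 := by
    have hmE : (a₁ + (2 * y - a₁)) / 2 ∈ E := by
      have : (a₁ + (2 * y - a₁)) / 2 = y := by ring
      rw [this]; exact hyE
    have := anchor_bound g a₁ (2 * y - a₁) (hmid a₁ (2 * y - a₁) ha₁ hy'E hmE) hg₁
    have he : (a₁ + (2 * y - a₁)) / 2 = y := by ring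
    rwa [he] at this
  have t3 : |g (2 * x - y)| ≤ |g (2 * (2 * x - y) - a₂)| / 2 + 1 := by
    have hmE : (a₂ + (2 * (2 * x - y) - a₂)) / 2 ∈ E := by
      have : (a₂ + (2 * (2 * x - y) - a₂)) / 2 = 2 * x - y := by ring
      rw [this]; exact hzE
    have := anchor_bound g a₂ (2 * (2 * x - y) - a₂) (hmid a₂ _ ha₂ hz'E hmE) hg₂
    have he : (a₂ + (2 * (2 * x - y) - a₂)) / 2 = 2 * x - y := by ring
    rwa [he] at this
  rcases abs_le.mp t1 with ⟨u1, u2⟩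
  rcases abs_le.mp t2 with ⟨v1, v2⟩
  rcases abs_le.mp t3 with ⟨w1, w2⟩
  have := le_abs_self (g y); have := neg_abs_le (g y)
  have := le_abs_self (g (2*x - y)); have := neg_abs_le (g (2*x - y))
  exact abs_le.mpr ⟨by linarith, by linarith⟩

lemma edge_step (m₁ m₂ eL α β x a₁ a₂ d₁ d₂ : ℝ) (E : Set ℝ) (g : ℝ → ℝ)
    (hN : volume (Set.Icc m₁ m₂ \ E) ≤ ENNReal.ofReal eL)
    (hmid : ∀ u v, u ∈ E → v ∈ E → (u + v) / 2 ∈ E → |(g u + g v) / 2 - g ((u + v) / 2)| ≤ 1)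
    (ha₁ : a₁ ∈ E) (ha₂ : a₂ ∈ E) (hg₁ : g a₁ = 0) (hg₂ : g a₂ = 0)
    (hx : x ∈ E) (heL : 0 ≤ eL) (hlen : 5 * eL < β - α)
    (hgeom : ∀ w ∈ Set.Icc α β, w ∈ Set.Icc m₁ m₂ ∧ (x + w) / 2 ∈ Set.Icc m₁ m₂ ∧
      x + w - a₁ ∈ Set.Icc d₁ d₂ ∧ 2 * w - a₂ ∈ Set.Icc d₁ d₂)
    (hD : Set.Icc d₁ d₂ ⊆ Set.Icc m₁ m₂) :
    ∃ p' w', (p' ∈ E ∧ p' ∈ Set.Icc d₁ d₂) ∧ (w' ∈ E ∧ w' ∈ Set.Icc d₁ d₂) ∧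
      |g x| ≤ |g p'| + |g w'| / 2 + 5 := by
  set N := Set.Icc m₁ m₂ \ E with hNdef
  have hv2 : volume ((fun w => 1 * w + (x - a₁)) ⁻¹' N) ≤ ENNReal.ofReal eL := by
    have := vol_preimage_affine_le 1 (x - a₁) 1 eL (by norm_num) (by norm_num) N hN
    simpa using this
  have hv3 : volume ((fun w => 2 * w + (-a₂)) ⁻¹' N) ≤ ENNReal.ofReal eL := by
    have := vol_preimage_affine_le 2 (-a₂) 1 eL (by norm_num)
      (by rw [abs_of_nonneg (by norm_num : (0:ℝ) ≤ (2:ℝ)⁻¹)]; norm_num) N hN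
    simpa using this
  have hv4 : volume ((fun w => (1/2) * w + x / 2) ⁻¹' N) ≤ ENNReal.ofReal (2 * eL) := by
    refine vol_preimage_affine_le (1/2) (x/2) 2 eL (by norm_num) ?_ N hN
    rw [abs_of_nonneg (by norm_num : (0:ℝ) ≤ ((1:ℝ)/2)⁻¹)]; norm_num
  obtain ⟨w, hwJ, hb1, hb2, hb3, hb4⟩ := pick_helper α β eL N
    ((fun w => 1 * w + (x - a₁)) ⁻¹' N) ((fun w => 2 * w + (-a₂)) ⁻¹' N)
    ((fun w => (1/2) * w + x / 2) ⁻¹' N)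
    hN hv2 hv3 hv4 heL hlen
  obtain ⟨hw1, hw2, hw3, hw4⟩ := hgeom w hwJ
  have hwE : w ∈ E := by by_contra h; exact hb1 ⟨hw1, h⟩
  have hp'E : x + w - a₁ ∈ E := by
    by_contra h
    exact hb2 (show 1 * w + (x - a₁) ∈ N from by
      have : 1 * w + (x - a₁) = x + w - a₁ := by ring
      rw [this]; exact ⟨hD hw3, h⟩)
  have hw'E : 2 * w - a₂ ∈ E := by
    by_contra h
    exact hb3 (show 2 * w + (-a₂) ∈ N from by
      have : 2 * w + (-a₂) = 2 * w - a₂ := by ring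
      rw [this]; exact ⟨hD hw4, h⟩)
  have hpE : (x + w) / 2 ∈ E := by
    by_contra h
    exact hb4 (show (1/2) * w + x / 2 ∈ N from by
      have : (1/2) * w + x / 2 = (x + w) / 2 := by ring
      rw [this]; exact ⟨hw2, h⟩)
  refine ⟨x + w - a₁, 2 * w - a₂, ⟨hp'E, hw3⟩, ⟨hw'E, hw4⟩, ?_⟩
  have t1 : |(g x + g w) / 2 - g ((x + w) / 2)| ≤ 1 := hmid x w hx hwE hpE
  have t2 : |g ((x + w) / 2)| ≤ |g (x + w - a₁)| / 2 + 1 := by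
    have hmE : (a₁ + (x + w - a₁)) / 2 ∈ E := by
      have : (a₁ + (x + w - a₁)) / 2 = (x + w) / 2 := by ring
      rw [this]; exact hpE
    have := anchor_bound g a₁ (x + w - a₁) (hmid a₁ _ ha₁ hp'E hmE) hg₁
    have he : (a₁ + (x + w - a₁)) / 2 = (x + w) / 2 := by ring
    rwa [he] at this
  have t3 : |g w| ≤ |g (2 * w - a₂)| / 2 + 1 := by
    have hmE : (a₂ + (2 * w - a₂)) / 2 ∈ E := by
      have : (a₂ + (2 * w - a₂)) / 2 = w := by ring
      rw [this]; exact hwE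
    have := anchor_bound g a₂ (2 * w - a₂) (hmid a₂ _ ha₂ hw'E hmE) hg₂
    have he : (a₂ + (2 * w - a₂)) / 2 = w := by ring
    rwa [he] at this
  rcases abs_le.mp t1 with ⟨u1, u2⟩
  rcases abs_le.mp t2 with ⟨v1, v2⟩
  rcases abs_le.mp t3 with ⟨w1, w2⟩
  have := le_abs_self (g ((x + w) / 2)); have := neg_abs_le (g ((x + w) / 2))
  have := le_abs_self (g w); have := neg_abs_le (g w)
  have := le_abs_self (g (x + w - a₁)); have := neg_abs_le (g (x + w - a₁))
  exact abs_le.mpr ⟨by linarith, by linarith⟩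

theorem almost_affine_boundedness :
    ∃ ε₀ > (0 : ℝ), ∃ M > (0 : ℝ),
      ∀ (m₁ m₂ ε : ℝ) (E : Set ℝ) (f : ℝ → ℝ),
        MeasurableSet E → E ⊆ Set.Icc m₁ m₂ →
        m₁ ∈ E → m₂ ∈ E → (m₁ + m₂) / 2 ∈ E →
        0 ≤ ε → ε ≤ ε₀ →
        ENNReal.ofReal ((1 - ε) * (m₂ - m₁)) ≤ volume E →
        Measurable f → (∃ C : ℝ, ∀ x ∈ E, |f x| ≤ C) →
        (∀ m' m'', m' ∈ E → m'' ∈ E → (m' + m'') / 2 ∈ E →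
          |(f m' + f m'') / 2 - f ((m' + m'') / 2)| ≤ 1) →
        ∃ a b : ℝ, ∀ x ∈ E, |f x - (a * x + b)| ≤ M := by
  refine ⟨1/1000, by norm_num, 11, by norm_num, ?_⟩
  intro m₁ m₂ ε E f hE hEsub hm₁E hm₂E _hcE hε0 hε₁ hvol _hf hCex hmid
  obtain ⟨C, hC⟩ := hCex
  have hm₁₂ : m₁ ≤ m₂ := (hEsub hm₁E).2
  rcases eq_or_lt_of_le hm₁₂ with heq | hlt
  · -- degenerate
    refine ⟨0, f m₁, ?_⟩
    intro x hx
    have hx' := hEsub hx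
    rw [← heq] at hx'
    have : x = m₁ := le_antisymm hx'.2 hx'.1
    subst this
    simp
  -- main case
  have hL : 0 < m₂ - m₁ := by linarith
  set a : ℝ := (f m₂ - f m₁) / (m₂ - m₁) with ha
  set b : ℝ := f m₁ - a * m₁ with hb
  set g : ℝ → ℝ := fun t => f t - (a * t + b) with hgdef
  have hg₁ : g m₁ = 0 := by simp only [hgdef, hb]; ring
  have hg₂ : g m₂ = 0 := by
    have : a * (m₂ - m₁) = f m₂ - f m₁ := by
      rw [ha]; field_simp
    simp only [hgdef, hb]
    nlinarith [this]
  have hgmid : ∀ u v, u ∈ E → v ∈ E → (u + v) / 2 ∈ E →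
      |(g u + g v) / 2 - g ((u + v) / 2)| ≤ 1 := by
    intro u v hu hv hm
    have he : (g u + g v) / 2 - g ((u + v) / 2)
        = (f u + f v) / 2 - f ((u + v) / 2) := by
      simp only [hgdef]; ring
    rw [he]; exact hmid u v hu hv hm
  -- measure of complement
  have hEfin : volume E ≠ ⊤ := by
    refine ne_top_of_le_ne_top ?_ (measure_mono hEsub)
    rw [Real.volume_Icc]; exact ENNReal.ofReal_ne_top
  have hN : volume (Set.Icc m₁ m₂ \ E) ≤ ENNReal.ofReal (ε * (m₂ - m₁)) := by
    rw [measure_diff hEsub hE.nullMeasurableSet hEfin]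
    rw [tsub_le_iff_right, Real.volume_Icc]
    have he : ENNReal.ofReal (m₂ - m₁)
        = ENNReal.ofReal (ε * (m₂ - m₁)) + ENNReal.ofReal ((1 - ε) * (m₂ - m₁)) := by
      rw [← ENNReal.ofReal_add (by positivity) (by nlinarith)]
      congr 1; ring
    rw [he]
    exact add_le_add le_rfl hvol
  have heL : (0:ℝ) ≤ ε * (m₂ - m₁) := by positivity
  have heps : ε * (m₂ - m₁) ≤ (m₂ - m₁) / 1000 := by nlinarith
  -- main contraction step
  have hstep : ∀ x ∈ E, m₁ + (m₂ - m₁)/16 ≤ x → x ≤ m₂ - (m₂ - m₁)/16 →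
      ∃ y' z', (y' ∈ E ∧ y' ∈ Set.Icc (m₁ + (m₂ - m₁)/16) (m₂ - (m₂ - m₁)/16)) ∧
        (z' ∈ E ∧ z' ∈ Set.Icc (m₁ + (m₂ - m₁)/16) (m₂ - (m₂ - m₁)/16)) ∧
        |g x| ≤ |g y'| / 4 + |g z'| / 4 + 2 := by
    intro x hxE hx1 hx2
    have hDsub : Set.Icc (m₁ + (m₂ - m₁)/16) (m₂ - (m₂ - m₁)/16) ⊆ Set.Icc m₁ m₂ := by
      intro t ht
      simp only [Set.mem_Icc] at ht ⊢
      constructor <;> linarith [ht.1, ht.2]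
    by_cases c1 : x - m₁ ≤ (m₂ - m₁)/4
    · exact window_step m₁ m₂ (ε * (m₂ - m₁)) (m₁ + (m₂ - m₁)/32) (2*x - m₁ - (m₂ - m₁)/32)
        x m₁ m₁ _ _ E g hEsub hN hgmid hm₁E hm₁E hg₁ hg₁ hxE heL (by linarith)
        (by intro y hy; simp only [Set.mem_Icc] at hy ⊢
            refine ⟨⟨?_,?_⟩,⟨?_,?_⟩,⟨?_,?_⟩,⟨?_,?_⟩⟩ <;> linarith [hy.1, hy.2]) hDsub
    by_cases c2 : x - m₁ ≤ 3*(m₂ - m₁)/8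
    · exact window_step m₁ m₂ (ε * (m₂ - m₁)) (2*x - m₁ - (m₂ - m₁)/2 + (m₂ - m₁)/32)
        (m₁ + (m₂ - m₁)/2 - (m₂ - m₁)/32)
        x m₁ m₁ _ _ E g hEsub hN hgmid hm₁E hm₁E hg₁ hg₁ hxE heL (by linarith)
        (by intro y hy; simp only [Set.mem_Icc] at hy ⊢
            refine ⟨⟨?_,?_⟩,⟨?_,?_⟩,⟨?_,?_⟩,⟨?_,?_⟩⟩ <;> linarith [hy.1, hy.2]) hDsub
    by_cases c3 : x - m₁ ≤ (m₂ - m₁)/2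
    · exact window_step m₁ m₂ (ε * (m₂ - m₁)) (m₁ + (m₂ - m₁)/32)
        (2*x - m₁ - (m₂ - m₁)/2 - (m₂ - m₁)/32)
        x m₁ m₂ _ _ E g hEsub hN hgmid hm₁E hm₂E hg₁ hg₂ hxE heL (by linarith)
        (by intro y hy; simp only [Set.mem_Icc] at hy ⊢
            refine ⟨⟨?_,?_⟩,⟨?_,?_⟩,⟨?_,?_⟩,⟨?_,?_⟩⟩ <;> linarith [hy.1, hy.2]) hDsub
    by_cases c4 : x - m₁ ≤ 5*(m₂ - m₁)/8
    · exact window_step m₁ m₂ (ε * (m₂ - m₁)) (2*x - m₂ + (m₂ - m₁)/32)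
        (m₁ + (m₂ - m₁)/2 - (m₂ - m₁)/32)
        x m₁ m₂ _ _ E g hEsub hN hgmid hm₁E hm₂E hg₁ hg₂ hxE heL (by linarith)
        (by intro y hy; simp only [Set.mem_Icc] at hy ⊢
            refine ⟨⟨?_,?_⟩,⟨?_,?_⟩,⟨?_,?_⟩,⟨?_,?_⟩⟩ <;> linarith [hy.1, hy.2]) hDsub
    by_cases c5 : x - m₁ ≤ 3*(m₂ - m₁)/4
    · exact window_step m₁ m₂ (ε * (m₂ - m₁)) (m₁ + (m₂ - m₁)/2 + (m₂ - m₁)/32)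
        (2*x - m₁ - (m₂ - m₁)/2 - (m₂ - m₁)/32)
        x m₂ m₂ _ _ E g hEsub hN hgmid hm₂E hm₂E hg₂ hg₂ hxE heL (by linarith)
        (by intro y hy; simp only [Set.mem_Icc] at hy ⊢
            refine ⟨⟨?_,?_⟩,⟨?_,?_⟩,⟨?_,?_⟩,⟨?_,?_⟩⟩ <;> linarith [hy.1, hy.2]) hDsub
    · exact window_step m₁ m₂ (ε * (m₂ - m₁)) (2*x - m₂ + (m₂ - m₁)/32) (m₂ - (m₂ - m₁)/32)
        x m₂ m₂ _ _ E g hEsub hN hgmid hm₂E hm₂E hg₂ hg₂ hxE heL (by linarith)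
        (by intro y hy; simp only [Set.mem_Icc] at hy ⊢
            refine ⟨⟨?_,?_⟩,⟨?_,?_⟩,⟨?_,?_⟩,⟨?_,?_⟩⟩ <;> linarith [hy.1, hy.2]) hDsub
  -- global bound for g on E
  have hCb : ∀ t ∈ E, |g t| ≤ C + (|a| * (|m₁| + |m₂|) + |b|) := by
    intro t ht
    have h1 := hC t ht
    have ht' := hEsub ht
    have h2 : |t| ≤ |m₁| + |m₂| := by
      rcases abs_cases t with ⟨he, _⟩ | ⟨he, _⟩ <;>
        [ (have := le_abs_self m₂; have := abs_nonneg m₁; linarith [ht'.2]);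
          (have := neg_abs_le m₁; have := abs_nonneg m₂; linarith [ht'.1]) ]
    calc |g t| = |f t - (a * t + b)| := rfl
      _ ≤ |f t| + |a * t + b| := abs_sub _ _
      _ ≤ C + (|a * t| + |b|) := by gcongr; exact abs_add_le _ _
      _ ≤ C + (|a| * (|m₁| + |m₂|) + |b|) := by
          have h3 : |a * t| ≤ |a| * (|m₁| + |m₂|) := by
            rw [abs_mul]; exact mul_le_mul_of_nonneg_left h2 (abs_nonneg a)
          linarith
  -- sup bound on the interior set
  have h4 : ∀ x ∈ E, m₁ + (m₂ - m₁)/16 ≤ x → x ≤ m₂ - (m₂ - m₁)/16 → |g x| ≤ 4 := by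
    intro x hxE hx1 hx2
    set S : Set ℝ := {t | ∃ u, (u ∈ E ∧ u ∈ Set.Icc (m₁ + (m₂ - m₁)/16) (m₂ - (m₂ - m₁)/16))
      ∧ t = |g u|} with hS
    have hbdd : BddAbove S := by
      refine ⟨C + (|a| * (|m₁| + |m₂|) + |b|), ?_⟩
      rintro t ⟨u, ⟨huE, _⟩, rfl⟩
      exact hCb u huE
    have hne : S.Nonempty := ⟨|g x|, x, ⟨hxE, Set.mem_Icc.mpr ⟨hx1, hx2⟩⟩, rfl⟩
    have hsup : ∀ t ∈ S, t ≤ sSup S / 4 + sSup S / 4 + 2 := by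
      rintro t ⟨u, ⟨huE, huD⟩, rfl⟩
      obtain ⟨y', z', ⟨hy'E, hy'D⟩, ⟨hz'E, hz'D⟩, hineq⟩ :=
        hstep u huE (Set.mem_Icc.mp huD).1 (Set.mem_Icc.mp huD).2
      have l1 : |g y'| ≤ sSup S := le_csSup hbdd ⟨y', ⟨hy'E, hy'D⟩, rfl⟩
      have l2 : |g z'| ≤ sSup S := le_csSup hbdd ⟨z', ⟨hz'E, hz'D⟩, rfl⟩
      linarith
    have hs4 : sSup S ≤ 4 := by
      have := csSup_le hne hsup
      linarith
    exact le_trans (le_csSup hbdd ⟨x, ⟨hxE, Set.mem_Icc.mpr ⟨hx1, hx2⟩⟩, rfl⟩) hs4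
  -- final
  refine ⟨a, b, ?_⟩
  intro x hxE
  have hx' := hEsub hxE
  have hfg : f x - (a * x + b) = g x := rfl
  rw [hfg]
  by_cases e1 : x ≤ m₁ + (m₂ - m₁)/16
  · -- left edge
    obtain ⟨p', w', ⟨hp'E, hp'D⟩, ⟨hw'E, hw'D⟩, hineq⟩ :=
      edge_step m₁ m₂ (ε * (m₂ - m₁)) ((m₁+m₂)/2 + (m₂ - m₁)/16) ((m₁+m₂)/2 + 3*(m₂ - m₁)/16)
        x m₁ m₂ (m₁ + (m₂ - m₁)/16) (m₂ - (m₂ - m₁)/16) E g hN hgmid hm₁E hm₂E hg₁ hg₂ hxE heL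
        (by linarith)
        (by intro w hw; simp only [Set.mem_Icc] at hw ⊢
            refine ⟨⟨?_,?_⟩,⟨?_,?_⟩,⟨?_,?_⟩,⟨?_,?_⟩⟩ <;> linarith [hw.1, hw.2, hx'.1, hx'.2])
        (by intro t ht; simp only [Set.mem_Icc] at ht ⊢
            constructor <;> linarith [ht.1, ht.2])
    have b1 := h4 p' hp'E (Set.mem_Icc.mp hp'D).1 (Set.mem_Icc.mp hp'D).2
    have b2 := h4 w' hw'E (Set.mem_Icc.mp hw'D).1 (Set.mem_Icc.mp hw'D).2
    linarith
  by_cases e2 : m₂ - (m₂ - m₁)/16 ≤ x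
  · -- right edge
    obtain ⟨p', w', ⟨hp'E, hp'D⟩, ⟨hw'E, hw'D⟩, hineq⟩ :=
      edge_step m₁ m₂ (ε * (m₂ - m₁)) ((m₁+m₂)/2 - 3*(m₂ - m₁)/16) ((m₁+m₂)/2 - (m₂ - m₁)/16)
        x m₂ m₁ (m₁ + (m₂ - m₁)/16) (m₂ - (m₂ - m₁)/16) E g hN hgmid hm₂E hm₁E hg₂ hg₁ hxE heL
        (by linarith)
        (by intro w hw; simp only [Set.mem_Icc] at hw ⊢
            refine ⟨⟨?_,?_⟩,⟨?_,?_⟩,⟨?_,?_⟩,⟨?_,?_⟩⟩ <;> linarith [hw.1, hw.2, hx'.1, hx'.2])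
        (by intro t ht; simp only [Set.mem_Icc] at ht ⊢
            constructor <;> linarith [ht.1, ht.2])
    have b1 := h4 p' hp'E (Set.mem_Icc.mp hp'D).1 (Set.mem_Icc.mp hp'D).2
    have b2 := h4 w' hw'E (Set.mem_Icc.mp hw'D).1 (Set.mem_Icc.mp hw'D).2
    linarith
  · -- interior
    have hx1 : m₁ + (m₂ - m₁)/16 ≤ x := by linarith [not_le.mp e1]
    have hx2 : x ≤ m₂ - (m₂ - m₁)/16 := by linarith [not_le.mp e2]
    obtain ⟨y', z', ⟨hy'E, hy'D⟩, ⟨hz'E, hz'D⟩, hineq⟩ := hstep x hxE hx1 hx2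
    have b1 := h4 y' hy'E (Set.mem_Icc.mp hy'D).1 (Set.mem_Icc.mp hy'D).2
    have b2 := h4 z' hz'E (Set.mem_Icc.mp hz'D).1 (Set.mem_Icc.mp hz'D).2
    linarith
end

section
/- Second part of almost-affine lemma: under the hypotheses above, if moreover |f(m1)| + |f(m2)| ≤ K, then |f| ≤ K + M on E, with M a universal constant. -/
open MeasureTheory

open Set
open scoped ENNReal
set_option maxHeartbeats 1000000

noncomputable def affEq (a b : ℝ) (hb : b ≠ 0) : ℝ ≃ᵐ ℝ :=
  ((Homeomorph.mulLeft₀ b hb).trans (Homeomorph.addLeft a)).toMeasurableEquiv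

lemma affEq_apply (a b : ℝ) (hb : b ≠ 0) (y : ℝ) : affEq a b hb y = a + b * y := rfl

lemma map_affEq (a b : ℝ) (hb : b ≠ 0) :
    Measure.map (affEq a b hb) volume = ENNReal.ofReal |b⁻¹| • volume := by
  rw [show ⇑(affEq a b hb) = (fun y => a + y) ∘ (fun y => b * y) from rfl,
    ← Measure.map_map (by fun_prop) (by fun_prop)]
  rw [Real.map_volume_mul_left hb]
  rw [Measure.map_smul]
  congr 1
  exact map_add_left_eq_self volume a

lemma vol_preimage_aff (a b : ℝ) (hb : b ≠ 0) (s : Set ℝ) :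
    volume ((fun y => a + b * y) ⁻¹' s) = ENNReal.ofReal |b⁻¹| * volume s := by
  have h := map_affEq a b hb
  have h2 := (affEq a b hb).map_apply (μ := volume) s
  rw [h] at h2
  simpa [affEq_apply, show ⇑(affEq a b hb) = fun y => a + b * y from rfl] using h2.symm

lemma integral_preimage_aff (a b : ℝ) (hb : b ≠ 0) (s : Set ℝ) (F : ℝ → ℝ) :
    ∫ y in (fun y => a + b * y) ⁻¹' s, F (a + b * y) = |b⁻¹| * ∫ z in s, F z := by
  have h1 : ∫ z in s, F z ∂(Measure.map (affEq a b hb) volume)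
      = ∫ y in (affEq a b hb) ⁻¹' s, F (affEq a b hb y) := by
    rw [MeasureTheory.setIntegral_map_equiv]
  rw [map_affEq] at h1
  rw [Measure.restrict_smul] at h1
  rw [integral_smul_measure] at h1
  have : (ENNReal.ofReal |b⁻¹|).toReal = |b⁻¹| := ENNReal.toReal_ofReal (abs_nonneg _)
  rw [this] at h1
  simpa [affEq_apply, show ⇑(affEq a b hb) = fun y => a + b * y from rfl] using h1.symm

lemma intOnBdd {F : ℝ → ℝ} {s : Set ℝ} {N : ℝ} (hfin : volume s ≠ ⊤)
    (hm : Measurable F) (h : ∀ y ∈ s, |F y| ≤ N) (hs : MeasurableSet s) :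
    IntegrableOn F s volume := by
  apply Measure.integrableOn_of_bounded hfin hm.aestronglyMeasurable
  exact (ae_restrict_iff' hs).2 (Filter.Eventually.of_forall (fun y hy => by
    simpa [Real.norm_eq_abs] using h y hy))

lemma absIntLe {F : ℝ → ℝ} {s : Set ℝ} {N : ℝ} (hfin : volume s < ⊤)
    (hs : MeasurableSet s) (h : ∀ y ∈ s, |F y| ≤ N) :
    |∫ y in s, F y| ≤ N * (volume s).toReal := by
  have := norm_setIntegral_le_of_norm_le_const (f := F) (C := N) hfin
    (fun y hy => by rw [Real.norm_eq_abs]; exact h y hy)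
  rwa [Real.norm_eq_abs, measureReal_def] at this

section Star

variable (E : Set ℝ) (g : ℝ → ℝ) (ε N : ℝ)

/-- The key integral identity (★). -/
lemma starLemma
    (hE : MeasurableSet E) (hE1 : E ⊆ Icc 0 1)
    (hε0 : 0 ≤ ε) (hε1 : ε ≤ 1)
    (hD : volume (Icc (0:ℝ) 1 \ E) ≤ ENNReal.ofReal ε)
    (hvol : ENNReal.ofReal (1 - ε) ≤ volume E)
    (hg : Measurable g)
    (hNb : ∀ x ∈ E, |g x| ≤ N)
    (hrel : ∀ a b, a ∈ E → b ∈ E → (a+b)/2 ∈ E → |g a + g b - 2 * g ((a+b)/2)| ≤ 2)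
    (x : ℝ) (hx : x ∈ E) :
    |g x - (4 * (∫ z in E ∩ Icc (x/2) ((x+1)/2), g z) - (∫ z in E, g z))| ≤ 2 + 7 * ε * N := by
  have hN0 : 0 ≤ N := le_trans (abs_nonneg _) (hNb x hx)
  -- basic measure facts
  have hEfin : volume E ≤ 1 := by
    calc volume E ≤ volume (Icc (0:ℝ) 1) := measure_mono hE1
    _ = 1 := by rw [Real.volume_Icc]; norm_num
  have hEne : volume E ≠ ⊤ := (lt_of_le_of_lt hEfin ENNReal.one_lt_top).ne
  have hgsm : AEStronglyMeasurable g volume := hg.aestronglyMeasurable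
  have hintE : IntegrableOn g E volume := by
    apply Measure.integrableOn_of_bounded hEne hgsm
    exact (ae_restrict_iff' hE).2 (Filter.Eventually.of_forall (fun y hy => by
      simpa [Real.norm_eq_abs] using hNb y hy))
  -- the sets A and B
  set A : Set ℝ := E ∩ (fun y => x/2 + (1/2) * y) ⁻¹' E with hA_def
  set B : Set ℝ := E ∩ (fun z => -x + 2 * z) ⁻¹' E with hB_def
  have hAm : MeasurableSet A := hE.inter ((by fun_prop : Measurable fun y : ℝ => x/2 + (1/2)*y) hE)
  have hBm : MeasurableSet B := hE.inter ((by fun_prop : Measurable fun z : ℝ => -x + 2*z) hE)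
  have hAE : A ⊆ E := inter_subset_left
  have hBE : B ⊆ E := inter_subset_left

  have hAB : A = (fun y => x/2 + (1/2) * y) ⁻¹' B := by
    ext y
    simp only [hA_def, hB_def, mem_inter_iff, mem_preimage]
    constructor
    · rintro ⟨h1, h2⟩
      refine ⟨h2, ?_⟩
      have : -x + 2 * (x/2 + 1/2 * y) = y := by ring
      rw [this]; exact h1
    · rintro ⟨h1, h2⟩
      have : -x + 2 * (x/2 + 1/2 * y) = y := by ring
      rw [this] at h2
      exact ⟨h2, h1⟩
  set W : Set ℝ := Icc (x/2) ((x+1)/2) with hW_def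
  set D : Set ℝ := Icc (0:ℝ) 1 \ E with hD_def
  have hDm : MeasurableSet D := measurableSet_Icc.diff hE
  -- substitution
  have hsub : (∫ y in A, g (x/2 + (1/2)*y)) = 2 * ∫ z in B, g z := by
    rw [hAB, integral_preimage_aff (x/2) (1/2) (by norm_num) B g]
    norm_num
  -- pointwise relation on A
  have Hpt : ∀ y ∈ A, |g x + g y - 2 * g (x/2 + (1/2)*y)| ≤ 2 := by
    intro y hy
    have h2 : (x + y)/2 ∈ E := by
      have h2' := hy.2
      rw [mem_preimage] at h2'
      have e0 : x/2 + (1/2:ℝ)*y = (x+y)/2 := by ring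
      rwa [e0] at h2'
    have hr := hrel x y hx hy.1 h2
    have e1 : (x+y)/2 = x/2 + (1/2:ℝ)*y := by ring
    rwa [e1] at hr
  -- finiteness of measures
  have hAfin : volume A ≠ ⊤ := by
    have : volume A ≤ volume E := measure_mono hAE
    exact (lt_of_le_of_lt (le_trans this hEfin) ENNReal.one_lt_top).ne
  have hAfin' : volume A < ⊤ := lt_of_le_of_ne le_top hAfin
  -- integrability
  have ha2 : IntegrableOn g A volume := hintE.mono_set hAE
  have ha3 : IntegrableOn (fun y => g (x/2 + (1/2)*y)) A volume := by
    apply intOnBdd hAfin (by fun_prop)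
    · intro y hy
      exact hNb _ hy.2
    · exact hAm
  -- integral of the relation
  have key1 : |(volume A).toReal * g x + (∫ y in A, g y) - 4 * ∫ z in B, g z|
      ≤ 2 * (volume A).toReal := by
    have hsplit : (∫ y in A, (g x + g y - 2 * g (x/2 + (1/2)*y)))
        = (volume A).toReal * g x + (∫ y in A, g y) - 4 * ∫ z in B, g z := by
      have hconst : IntegrableOn (fun _ : ℝ => g x) A volume :=
        integrableOn_const hAfin'.ne
      have hconst2 : IntegrableOn (fun y : ℝ => g x + g y) A volume := hconst.add ha2
      have hmul2 : IntegrableOn (fun y : ℝ => 2 * g (x/2 + (1/2)*y)) A volume := ha3.const_mul 2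
      rw [integral_sub hconst2 hmul2, integral_add hconst ha2,
        integral_const_mul, setIntegral_const, hsub, smul_eq_mul, measureReal_def]
      ring
    rw [← hsplit]
    exact absIntLe hAfin' hAm Hpt

  -- measure of E \ A
  have hEA_sub : E \ A ⊆ (fun y => x/2 + (1/2) * y) ⁻¹' D := by
    intro y hy
    rw [mem_preimage, hD_def]
    have hy1 := hE1 hy.1
    have hx1 := hE1 hx
    rw [mem_Icc] at hy1 hx1
    refine ⟨mem_Icc.2 ⟨by nlinarith [hy1.1, hx1.1], by nlinarith [hy1.2, hx1.2]⟩, ?_⟩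
    intro hmem
    exact hy.2 ⟨hy.1, hmem⟩
  have hEA : volume (E \ A) ≤ ENNReal.ofReal (2*ε) := by
    calc volume (E \ A) ≤ volume ((fun y => x/2 + (1/2) * y) ⁻¹' D) := measure_mono hEA_sub
    _ = ENNReal.ofReal |((1:ℝ)/2)⁻¹| * volume D := vol_preimage_aff _ _ (by norm_num) _
    _ ≤ ENNReal.ofReal 2 * ENNReal.ofReal ε := by
        rw [show |((1:ℝ)/2)⁻¹| = (2:ℝ) by norm_num]
        exact mul_le_mul_right hD _
    _ = ENNReal.ofReal (2*ε) := by
        rw [← ENNReal.ofReal_mul (by norm_num)]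
  -- B vs E ∩ W
  have hBW : B ⊆ E ∩ W := by
    intro z hz
    refine ⟨hz.1, ?_⟩
    have h2 := hE1 hz.2
    simp only [mem_Icc] at h2
    have hx1 := hE1 hx
    simp only [mem_Icc] at hx1
    rw [hW_def, mem_Icc]
    constructor <;> nlinarith [h2.1, h2.2]
  have hWB_sub : (E ∩ W) \ B ⊆ (fun z => -x + 2 * z) ⁻¹' D := by
    intro z hz
    rw [mem_preimage, hD_def]
    have hzW := hz.1.2
    rw [hW_def, mem_Icc] at hzW
    refine ⟨mem_Icc.2 ⟨by nlinarith [hzW.1], by nlinarith [hzW.2]⟩, ?_⟩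
    intro hmem
    exact hz.2 ⟨hz.1.1, hmem⟩
  have hWB : volume ((E ∩ W) \ B) ≤ ENNReal.ofReal (ε/2) := by
    calc volume ((E ∩ W) \ B) ≤ volume ((fun z => -x + 2 * z) ⁻¹' D) := measure_mono hWB_sub
    _ = ENNReal.ofReal |((2:ℝ))⁻¹| * volume D := vol_preimage_aff _ _ (by norm_num) _
    _ ≤ ENNReal.ofReal (1/2) * ENNReal.ofReal ε := by
        rw [show |((2:ℝ))⁻¹| = ((1:ℝ)/2) by norm_num]
        exact mul_le_mul_right hD _
    _ = ENNReal.ofReal (ε/2) := by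
        rw [← ENNReal.ofReal_mul (by norm_num)]; ring_nf
  -- real versions
  have hEAne : volume (E \ A) ≠ ⊤ := (lt_of_le_of_lt hEA ENNReal.ofReal_lt_top).ne
  have hvEA : (volume (E \ A)).toReal ≤ 2*ε := ENNReal.toReal_le_of_le_ofReal (by positivity) hEA
  have hsum : volume A + volume (E \ A) = volume E := by
    rw [measure_add_diff hAm.nullMeasurableSet E, union_eq_self_of_subset_left hAE]
  have hvE1 : 1 - ε ≤ (volume E).toReal := by
    have h := ENNReal.toReal_mono hEne hvol
    rwa [ENNReal.toReal_ofReal (by linarith)] at h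
  have hvA_low : 1 - 3*ε ≤ (volume A).toReal := by
    have h := congrArg ENNReal.toReal hsum
    rw [ENNReal.toReal_add hAfin hEAne] at h
    linarith [h, hvEA, hvE1]
  have hvA_up : (volume A).toReal ≤ 1 := by
    have h : volume A ≤ 1 := le_trans (measure_mono hAE) hEfin
    calc (volume A).toReal ≤ (1 : ℝ≥0∞).toReal := ENNReal.toReal_mono (by simp) h
    _ = 1 := by simp
  -- integral differences
  have hsplitE : (∫ z in E, g z) = (∫ y in A, g y) + ∫ y in E \ A, g y := by
    rw [← setIntegral_union disjoint_sdiff_right (hE.diff hAm) (hintE.mono_set hAE)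
      (hintE.mono_set diff_subset), union_diff_cancel hAE]
  have hIA : |(∫ z in E, g z) - ∫ y in A, g y| ≤ N * (2*ε) := by
    rw [hsplitE]
    have := absIntLe (lt_of_le_of_lt hEA ENNReal.ofReal_lt_top) (hE.diff hAm)
      (fun y hy => hNb y hy.1)
    calc |(∫ y in A, g y) + (∫ y in E \ A, g y) - ∫ y in A, g y|
        = |∫ y in E \ A, g y| := by ring_nf
    _ ≤ N * (volume (E \ A)).toReal := this
    _ ≤ N * (2*ε) := by apply mul_le_mul_of_nonneg_left hvEA hN0
  have hWfin : volume ((E ∩ W) \ B) ≠ ⊤ := (lt_of_le_of_lt hWB ENNReal.ofReal_lt_top).ne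
  have hvWB : (volume ((E ∩ W) \ B)).toReal ≤ ε/2 :=
    ENNReal.toReal_le_of_le_ofReal (by positivity) hWB
  have hWm : MeasurableSet (E ∩ W) := hE.inter measurableSet_Icc
  have hsplitW : (∫ z in E ∩ W, g z) = (∫ z in B, g z) + ∫ z in (E ∩ W) \ B, g z := by
    rw [← setIntegral_union disjoint_sdiff_right (hWm.diff hBm) (hintE.mono_set hBE)
      (hintE.mono_set (fun z hz => hz.1.1)), union_diff_cancel hBW]
  have hWBI : |(∫ z in E ∩ W, g z) - ∫ z in B, g z| ≤ N * (ε/2) := by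
    rw [hsplitW]
    have := absIntLe (lt_of_le_of_lt hWB ENNReal.ofReal_lt_top) (hWm.diff hBm)
      (fun z hz => hNb z hz.1.1)
    calc |(∫ z in B, g z) + (∫ z in (E ∩ W) \ B, g z) - ∫ z in B, g z|
        = |∫ z in (E ∩ W) \ B, g z| := by ring_nf
    _ ≤ N * (volume ((E ∩ W) \ B)).toReal := this
    _ ≤ N * (ε/2) := by apply mul_le_mul_of_nonneg_left hvWB hN0
  -- assemble
  have hgx : |g x| ≤ N := hNb x hx
  set vA := (volume A).toReal with hvA_def
  set I := ∫ z in E, g z with hI_def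
  set J := ∫ z in E ∩ W, g z with hJ_def
  set JB := ∫ z in B, g z with hJB_def
  set IA := ∫ y in A, g y with hIA_def
  have e2 : |(1 - vA) * g x| ≤ 3*ε*N := by
    rw [abs_mul]
    have h1 : |1 - vA| ≤ 3*ε := by
      rw [abs_le]; constructor <;> linarith
    calc |1 - vA| * |g x| ≤ (3*ε) * N :=
      mul_le_mul h1 hgx (abs_nonneg _) (by positivity)
    _ = 3*ε*N := by ring
  have t1 : |vA * g x + IA - 4 * JB| ≤ 2 * vA := key1
  have t3 : |4 * (JB - J)| ≤ 4 * (N * (ε/2)) := by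
    rw [abs_mul, abs_sub_comm]
    rw [show |(4:ℝ)| = 4 by norm_num]
    exact mul_le_mul_of_nonneg_left hWBI (by norm_num)
  have t4 : |I - IA| ≤ N * (2*ε) := hIA
  have hrw : g x - (4 * J - I)
      = (vA * g x + IA - 4 * JB) + ((1 - vA) * g x + (4 * (JB - J) + (I - IA))) := by ring
  rw [hrw]
  have c1 := abs_add_le (vA * g x + IA - 4 * JB) ((1 - vA) * g x + (4 * (JB - J) + (I - IA)))
  have c2 := abs_add_le ((1 - vA) * g x) (4 * (JB - J) + (I - IA))
  have c3 := abs_add_le (4 * (JB - J)) (I - IA)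
  have hεN : 0 ≤ ε * N := by positivity
  linarith [c1, c2, c3, t1, t3, t4, e2]



end Star

section Cmp

lemma intWindow (E s : Set ℝ) (g : ℝ → ℝ) (S m r : ℝ)
    (hintE : IntegrableOn g E volume) (hEne : volume E ≠ ⊤)
    (hsub : s ⊆ E) (hsm : MeasurableSet s)
    (hS : ∀ x ∈ E, g x ≤ S) (hm : ∀ x ∈ E, m ≤ g x) (hS0 : 0 ≤ S) (hm0 : m ≤ 0)
    (hr : (volume s).toReal ≤ r) :
    m * r ≤ (∫ z in s, g z) ∧ (∫ z in s, g z) ≤ S * r := by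
  have hsne : volume s ≠ ⊤ := by
    have h0 : volume s ≤ volume E := measure_mono hsub
    exact (lt_of_le_of_lt h0 (lt_of_le_of_ne le_top hEne)).ne
  have hsfin : volume s < ⊤ := lt_of_le_of_ne le_top hsne
  have hints : IntegrableOn g s volume := hintE.mono_set hsub
  have hconsti : IntegrableOn (fun _ : ℝ => S) s volume := integrableOn_const hsfin.ne
  have hconsti' : IntegrableOn (fun _ : ℝ => m) s volume := integrableOn_const hsfin.ne
  constructor
  · have h1 : (∫ _ in s, m) ≤ ∫ z in s, g z :=
      setIntegral_mono_on hconsti' hints hsm (fun z hz => hm z (hsub hz))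
    rw [setIntegral_const, smul_eq_mul, measureReal_def] at h1
    have : m * r ≤ (volume s).toReal * m := by
      rw [mul_comm]
      exact mul_le_mul_of_nonpos_right hr hm0
    linarith
  · have h1 : (∫ z in s, g z) ≤ ∫ _ in s, S :=
      setIntegral_mono_on hints hconsti hsm (fun z hz => hS z (hsub hz))
    rw [setIntegral_const, smul_eq_mul, measureReal_def] at h1
    have : (volume s).toReal * S ≤ S * r := by
      rw [mul_comm]
      exact mul_le_mul_of_nonneg_left hr hS0
    linarith

lemma cmpLemma (E : Set ℝ) (g : ℝ → ℝ) (S m : ℝ)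
    (hE : MeasurableSet E) (hE1 : E ⊆ Icc 0 1)
    (hintE : IntegrableOn g E volume)
    (hS : ∀ x ∈ E, g x ≤ S) (hm : ∀ x ∈ E, m ≤ g x) (hS0 : 0 ≤ S) (hm0 : m ≤ 0)
    (a b : ℝ) (hab : a ≤ b) :
    |(∫ z in E ∩ Icc (b/2) ((b+1)/2), g z) - (∫ z in E ∩ Icc (a/2) ((a+1)/2), g z)|
      ≤ (b - a)/2 * (S - m) := by
  have hEne : volume E ≠ ⊤ := by
    have : volume E ≤ volume (Icc (0:ℝ) 1) := measure_mono hE1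
    rw [Real.volume_Icc] at this
    exact (lt_of_le_of_lt this ENNReal.ofReal_lt_top).ne
  set Wa : Set ℝ := Icc (a/2) ((a+1)/2) with hWa
  set Wb : Set ℝ := Icc (b/2) ((b+1)/2) with hWb
  set up : Set ℝ := E ∩ (Wb \ Wa) with hup
  set dn : Set ℝ := E ∩ (Wa \ Wb) with hdn
  have hupm : MeasurableSet up := hE.inter (measurableSet_Icc.diff measurableSet_Icc)
  have hdnm : MeasurableSet dn := hE.inter (measurableSet_Icc.diff measurableSet_Icc)
  have hupvol : (volume up).toReal ≤ (b - a)/2 := by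
    have hsub2 : up ⊆ Ioc ((a+1)/2) ((b+1)/2) := by
      intro z hz
      have hzb := hz.2.1
      have hza := hz.2.2
      rw [hWb, mem_Icc] at hzb
      rw [hWa] at hza
      rw [mem_Ioc]
      constructor
      · by_contra hcon
        push_neg at hcon
        exact hza (mem_Icc.2 ⟨by linarith [hzb.1], hcon⟩)
      · exact hzb.2
    have hmo : volume up ≤ volume (Ioc ((a+1)/2) ((b+1)/2)) := measure_mono hsub2
    rw [Real.volume_Ioc] at hmo
    have h2 := ENNReal.toReal_le_of_le_ofReal (by linarith) hmo
    calc (volume up).toReal ≤ (b+1)/2 - (a+1)/2 := h2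
    _ = (b - a)/2 := by ring
  have hdnvol : (volume dn).toReal ≤ (b - a)/2 := by
    have hsub2 : dn ⊆ Ico (a/2) (b/2) := by
      intro z hz
      have hza := hz.2.1
      have hzb := hz.2.2
      rw [hWa, mem_Icc] at hza
      rw [hWb] at hzb
      rw [mem_Ico]
      refine ⟨hza.1, ?_⟩
      by_contra hcon
      push_neg at hcon
      exact hzb (mem_Icc.2 ⟨hcon, by linarith [hza.2]⟩)
    have hmo : volume dn ≤ volume (Ico (a/2) (b/2)) := measure_mono hsub2
    rw [Real.volume_Ico] at hmo
    have h2 := ENNReal.toReal_le_of_le_ofReal (by linarith) hmo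
    calc (volume dn).toReal ≤ b/2 - a/2 := h2
    _ = (b - a)/2 := by ring
  set X : Set ℝ := E ∩ Wa ∩ Wb with hX
  have hWbsplit : E ∩ Wb = X ∪ up := by
    rw [hX]
    ext z
    simp only [hup, mem_inter_iff, mem_union, mem_diff]
    tauto
  have hWasplit : E ∩ Wa = X ∪ dn := by
    rw [hX]
    ext z
    simp only [hdn, mem_inter_iff, mem_union, mem_diff]
    tauto
  have hdisj1 : Disjoint X up := by
    rw [hX]
    rw [Set.disjoint_left]
    rintro z ⟨⟨hzE, hzWa⟩, hzWb⟩ ⟨_, _, hno⟩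
    exact hno hzWa
  have hdisj2 : Disjoint X dn := by
    rw [hX]
    rw [Set.disjoint_left]
    rintro z ⟨⟨hzE, hzWa⟩, hzWb⟩ ⟨_, _, hno⟩
    exact hno hzWb
  have hint1 : IntegrableOn g X volume :=
    hintE.mono_set (fun z hz => hz.1.1)
  have hintup : IntegrableOn g up volume := hintE.mono_set (fun z hz => hz.1)
  have hintdn : IntegrableOn g dn volume := hintE.mono_set (fun z hz => hz.1)
  have heq1 : (∫ z in E ∩ Wb, g z) = (∫ z in X, g z) + ∫ z in up, g z := by
    rw [hWbsplit, setIntegral_union hdisj1 hupm hint1 hintup]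
  have heq2 : (∫ z in E ∩ Wa, g z) = (∫ z in X, g z) + ∫ z in dn, g z := by
    rw [hWasplit, setIntegral_union hdisj2 hdnm hint1 hintdn]
  have hup_b := intWindow E up g S m ((b-a)/2) hintE hEne (fun z hz => hz.1) hupm hS hm hS0 hm0 hupvol
  have hdn_b := intWindow E dn g S m ((b-a)/2) hintE hEne (fun z hz => hz.1) hdnm hS hm hS0 hm0 hdnvol
  rw [abs_le]
  constructor
  · rw [heq1, heq2]
    have := hup_b.1
    have := hdn_b.2
    nlinarith [hup_b.1, hdn_b.2]
  · rw [heq1, heq2]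
    nlinarith [hup_b.2, hdn_b.1]

end Cmp

section Inner

lemma innerLemma (E : Set ℝ) (g : ℝ → ℝ) (ε N S : ℝ)
    (hE : MeasurableSet E) (hE1 : E ⊆ Icc 0 1) (hc : (1/2:ℝ) ∈ E)
    (hε0 : 0 ≤ ε) (hε : ε ≤ 1/1024)
    (hD : volume (Icc (0:ℝ) 1 \ E) ≤ ENNReal.ofReal ε)
    (hg : Measurable g)
    (hNb : ∀ x ∈ E, |g x| ≤ N)
    (hrel : ∀ a b, a ∈ E → b ∈ E → (a+b)/2 ∈ E → |g a + g b - 2 * g ((a+b)/2)| ≤ 2)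
    (hgc : g (1/2) ≤ 1)
    (hS : ∀ x ∈ E, g x ≤ S)
    (hintE : IntegrableOn g E volume)
    (x₀ : ℝ) (hx₀ : x₀ ∈ E) (hx₀S : S - 1 ≤ g x₀)
    (hw : 5/32 ≤ min x₀ (1 - x₀)) :
    S ≤ 260 := by
  have hx01 := hE1 hx₀
  rw [mem_Icc] at hx01
  set w : ℝ := min x₀ (1 - x₀) with hw_def
  have hwx : w ≤ x₀ := min_le_left _ _
  have hwx' : w ≤ 1 - x₀ := min_le_right _ _
  have hw5 : 5/32 ≤ w := hw
  have hw2 : w ≤ 1/2 := by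
    rcases le_total x₀ (1/2) with h | h
    · calc w ≤ x₀ := hwx
      _ ≤ 1/2 := h
    · calc w ≤ 1 - x₀ := hwx'
      _ ≤ 1/2 := by linarith
  set D : Set ℝ := Icc (0:ℝ) 1 \ E with hD_def
  have hDm : MeasurableSet D := measurableSet_Icc.diff hE
  set J : Set ℝ := Icc (x₀ - w) (x₀ + w) with hJ_def
  have hJm : MeasurableSet J := measurableSet_Icc
  have hJ01 : J ⊆ Icc 0 1 := by
    intro y hy
    rw [hJ_def, mem_Icc] at hy
    rw [mem_Icc]
    constructor <;> linarith [hy.1, hy.2]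
  set At : Set ℝ := (E ∩ J) ∩ (fun y => 2*x₀ + (-1) * y) ⁻¹' E with hAt_def
  have hAtm : MeasurableSet At :=
    ((hE.inter hJm).inter (((by fun_prop : Measurable fun y : ℝ => 2*x₀ + (-1)*y)) hE))
  have hAtE : At ⊆ E := fun y hy => hy.1.1
  have hAtJ : At ⊆ J := fun y hy => hy.1.2
  have hEne : volume E ≠ ⊤ := by
    have h0 : volume E ≤ volume (Icc (0:ℝ) 1) := measure_mono hE1
    rw [Real.volume_Icc] at h0
    exact (lt_of_le_of_lt h0 ENNReal.ofReal_lt_top).ne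
  have hAtfin : volume At ≠ ⊤ := by
    have h0 : volume At ≤ volume E := measure_mono hAtE
    exact (lt_of_le_of_lt h0 (lt_of_le_of_ne le_top hEne)).ne
  have hAtfin' : volume At < ⊤ := lt_of_le_of_ne le_top hAtfin
  -- reflection invariance
  have hreflAt : (fun y => 2*x₀ + (-1) * y) ⁻¹' At = At := by
    ext y
    simp only [hAt_def, mem_preimage, mem_inter_iff]
    constructor
    · rintro ⟨⟨h1, h2⟩, h3⟩
      have e0 : 2*x₀ + (-1) * (2*x₀ + (-1)*y) = y := by ring
      rw [e0] at h3
      refine ⟨⟨h3, ?_⟩, h1⟩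
      rw [hJ_def, mem_Icc] at h2 ⊢
      constructor <;> linarith [h2.1, h2.2]
    · rintro ⟨⟨h1, h2⟩, h3⟩
      have e0 : 2*x₀ + (-1) * (2*x₀ + (-1)*y) = y := by ring
      refine ⟨⟨h3, ?_⟩, by rw [e0]; exact h1⟩
      rw [hJ_def, mem_Icc] at h2 ⊢
      constructor <;> linarith [h2.1, h2.2]
  -- (★★)
  have hreflE : ∀ y ∈ At, (2*x₀ + (-1) * y) ∈ E := fun y hy => hy.2
  have star2 : |(∫ y in At, g y) - (volume At).toReal * g x₀| ≤ (volume At).toReal := by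
    have Hpt : ∀ y ∈ At, |g y + g (2*x₀ + (-1) * y) - 2 * g x₀| ≤ 2 := by
      intro y hy
      have hmid : (y + (2*x₀ + (-1) * y))/2 = x₀ := by ring
      have hr := hrel y (2*x₀ + (-1) * y) (hAtE hy) (hreflE y hy) (by rw [hmid]; exact hx₀)
      rwa [hmid] at hr
    have hint1 : IntegrableOn g At volume := hintE.mono_set hAtE
    have hint2 : IntegrableOn (fun y => g (2*x₀ + (-1) * y)) At volume := by
      apply intOnBdd hAtfin (by fun_prop) (fun y hy => hNb _ (hreflE y hy)) hAtm
    have hrefl_int : (∫ y in At, g (2*x₀ + (-1) * y)) = ∫ y in At, g y := by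
      have h0 := integral_preimage_aff (2*x₀) (-1) (by norm_num) At g
      rw [hreflAt, show |(-1:ℝ)⁻¹| = (1:ℝ) by norm_num, one_mul] at h0
      exact h0
    have hsplit : (∫ y in At, (g y + g (2*x₀ + (-1) * y) - 2 * g x₀))
        = 2 * ((∫ y in At, g y) - (volume At).toReal * g x₀) := by
      have hconst : IntegrableOn (fun _ : ℝ => 2 * g x₀) At volume :=
        integrableOn_const hAtfin'.ne
      have hadd : IntegrableOn (fun y : ℝ => g y + g (2*x₀ + (-1) * y)) At volume :=
        hint1.add hint2
      rw [integral_sub hadd hconst, integral_add hint1 hint2, hrefl_int,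
        setIntegral_const, smul_eq_mul, measureReal_def]
      ring
    have habs := absIntLe hAtfin' hAtm Hpt
    rw [hsplit] at habs
    rw [abs_mul, abs_two] at habs
    linarith [abs_nonneg ((∫ y in At, g y) - (volume At).toReal * g x₀)]
  -- measure lower bound for At
  have hJAt : volume (J \ At) ≤ ENNReal.ofReal (2*ε) := by
    have hsub : J \ At ⊆ D ∪ (fun y => 2*x₀ + (-1) * y) ⁻¹' D := by
      intro y hy
      by_cases hyE : y ∈ E
      · right
        rw [mem_preimage, hD_def]
        refine ⟨?_, ?_⟩
        · have := hJ01 hy.1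
          rw [mem_Icc] at this ⊢
          have hyJ := hy.1
          rw [hJ_def, mem_Icc] at hyJ
          constructor <;> linarith [hyJ.1, hyJ.2]
        · intro hmem
          exact hy.2 ⟨⟨hyE, hy.1⟩, hmem⟩
      · left
        exact ⟨hJ01 hy.1, hyE⟩
    calc volume (J \ At) ≤ volume (D ∪ (fun y => 2*x₀ + (-1) * y) ⁻¹' D) := measure_mono hsub
    _ ≤ volume D + volume ((fun y => 2*x₀ + (-1) * y) ⁻¹' D) := measure_union_le _ _
    _ = volume D + ENNReal.ofReal |(-1 : ℝ)⁻¹| * volume D := by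
        rw [vol_preimage_aff _ _ (by norm_num)]
    _ ≤ ENNReal.ofReal ε + ENNReal.ofReal 1 * ENNReal.ofReal ε := by
        rw [show |(-1:ℝ)⁻¹| = (1:ℝ) by norm_num]
        exact add_le_add hD (mul_le_mul_right hD _)
    _ = ENNReal.ofReal (2*ε) := by
        rw [ENNReal.ofReal_one, one_mul, ← ENNReal.ofReal_add hε0 hε0]
        ring_nf

  -- At measure lower bound (real)
  have hJvol : volume J = ENNReal.ofReal (2*w) := by
    rw [hJ_def, Real.volume_Icc]
    congr 1
    ring
  have hJAtne : volume (J \ At) ≠ ⊤ := (lt_of_le_of_lt hJAt ENNReal.ofReal_lt_top).ne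
  have hsumJ : volume At + volume (J \ At) = volume J := by
    rw [measure_add_diff hAtm.nullMeasurableSet J, union_eq_self_of_subset_left hAtJ]
  have hvAt_up : (volume At).toReal ≤ 1 := by
    have h0 : volume At ≤ ENNReal.ofReal (2*w) := by
      rw [← hJvol]; exact measure_mono hAtJ
    have := ENNReal.toReal_le_of_le_ofReal (by linarith) h0
    linarith
  have hvAt_low : 2*w - 2*ε ≤ (volume At).toReal := by
    have h := congrArg ENNReal.toReal hsumJ
    rw [ENNReal.toReal_add hAtfin hJAtne, hJvol, ENNReal.toReal_ofReal (by linarith)] at h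
    have h2 := ENNReal.toReal_le_of_le_ofReal (by positivity) hJAt
    linarith
  -- Markov
  set Gs : Set ℝ := At ∩ g ⁻¹' (Ici (S - 128)) with hGs_def
  have hGsm : MeasurableSet Gs := hAtm.inter (hg measurableSet_Ici)
  have hGsAt : Gs ⊆ At := inter_subset_left
  set tb : Set ℝ := At \ Gs with htb_def
  have htbm : MeasurableSet tb := hAtm.diff hGsm
  have htbd : ∀ y ∈ tb, (128:ℝ) ≤ S - g y := by
    intro y hy
    have h1 : ¬ (S - 128 ≤ g y) := fun hcon => hy.2 ⟨hy.1, hcon⟩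
    push_neg at h1
    linarith
  have hintAt : IntegrableOn g At volume := hintE.mono_set hAtE
  have hSg_int : IntegrableOn (fun y => S - g y) At volume :=
    (integrableOn_const hAtfin'.ne).sub hintAt
  have htbfin : volume tb ≠ ⊤ := by
    have h0 : volume tb ≤ volume At := measure_mono diff_subset
    exact (lt_of_le_of_lt h0 hAtfin').ne
  have hmark : 128 * (volume tb).toReal ≤ ∫ y in At, (S - g y) := by
    have h1 : 128 * (volume tb).toReal ≤ ∫ y in tb, (S - g y) := by
      have := setIntegral_ge_of_const_le_real htbm htbfin htbd (hSg_int.mono_set diff_subset)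
      rwa [measureReal_def] at this
    have h2 : (∫ y in tb, (S - g y)) ≤ ∫ y in At, (S - g y) := by
      apply setIntegral_mono_set hSg_int
      · exact (ae_restrict_iff' hAtm).2 (Filter.Eventually.of_forall
          (fun y hy => by simp only [Pi.zero_apply]; linarith [hS y (hAtE hy)]))
      · exact HasSubset.Subset.eventuallyLE diff_subset
    linarith
  have hintval : (∫ y in At, (S - g y)) ≤ 2 * (volume At).toReal := by
    have h1 : (∫ y in At, (S - g y)) = S * (volume At).toReal - ∫ y in At, g y := by
      rw [integral_sub (integrableOn_const hAtfin'.ne : IntegrableOn (fun _ : ℝ => S) At volume) hintAt, setIntegral_const,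
        smul_eq_mul, measureReal_def]
      ring
    have h2 := abs_le.1 star2
    have h3 : S - 1 ≤ g x₀ := hx₀S
    have h4 : (volume At).toReal * g x₀ ≥ (volume At).toReal * (S - 1) :=
      mul_le_mul_of_nonneg_left h3 ENNReal.toReal_nonneg
    rw [h1]
    nlinarith [h2.1, ENNReal.toReal_nonneg (a := volume At)]
  have hvtb : (volume tb).toReal ≤ 1/64 := by nlinarith [hmark, hintval, hvAt_up]
  have hvtb' : volume tb ≤ ENNReal.ofReal (1/64) := by
    rw [← ENNReal.ofReal_toReal htbfin]
    exact ENNReal.ofReal_le_ofReal hvtb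
  -- J \ Gs
  have hJGs : volume (J \ Gs) ≤ ENNReal.ofReal (2*ε + 1/64) := by
    have hsub : J \ Gs ⊆ (J \ At) ∪ tb := by
      intro y hy
      by_cases hyAt : y ∈ At
      · right; exact ⟨hyAt, hy.2⟩
      · left; exact ⟨hy.1, hyAt⟩
    calc volume (J \ Gs) ≤ volume ((J \ At) ∪ tb) := measure_mono hsub
    _ ≤ volume (J \ At) + volume tb := measure_union_le _ _
    _ ≤ ENNReal.ofReal (2*ε) + ENNReal.ofReal (1/64) := add_le_add hJAt hvtb'
    _ = ENNReal.ofReal (2*ε + 1/64) := by rw [← ENNReal.ofReal_add (by positivity) (by norm_num)]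
  -- choose q
  set qlo : ℝ := 2*x₀ - 1/2 - (2*w - 1/16) with hqlo_def
  set qhi : ℝ := 2*x₀ - 1/2 + (2*w - 1/16) with hqhi_def
  set Q : Set ℝ := Icc qlo qhi with hQ_def
  have hJQ : ENNReal.ofReal (1/16) ≤ volume (J ∩ Q) := by
    rw [hJ_def, hQ_def, Icc_inter_Icc, Real.volume_Icc]
    apply ENNReal.ofReal_le_ofReal
    rcases le_total (x₀+w) qhi with h|h <;> rcases le_total (x₀-w) qlo with h2|h2
    · rw [min_eq_left h, max_eq_right h2]
      rw [hqlo_def]; linarith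
    · rw [min_eq_left h, max_eq_left h2]
      linarith
    · rw [min_eq_right h, max_eq_right h2]
      rw [hqlo_def, hqhi_def]; linarith
    · rw [min_eq_right h, max_eq_left h2]
      rw [hqhi_def]; linarith
  have hq : ∃ q, q ∈ Gs ∧ q ∈ Q := by
    by_contra hcon
    push_neg at hcon
    have hsub : J ∩ Q ⊆ J \ Gs := fun y hy => ⟨hy.1, fun hGs => hcon y hGs hy.2⟩
    have h0 := le_trans hJQ (le_trans (measure_mono hsub) hJGs)
    rw [ENNReal.ofReal_le_ofReal_iff (by positivity)] at h0
    linarith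
  obtain ⟨q, hqGs, hqQ⟩ := hq
  have hqE : q ∈ E := hAtE (hGsAt hqGs)
  have hgq : g q ≤ S := hS q hqE
  -- G₁
  set T : Set ℝ := Icc (7/16 : ℝ) (9/16) with hT_def
  have hT01 : T ⊆ Icc 0 1 := by
    intro r hr
    rw [hT_def, mem_Icc] at hr
    rw [mem_Icc]
    constructor <;> linarith [hr.1, hr.2]
  set G₁ : Set ℝ := (E ∩ T) ∩ (fun r => q/2 + (1/2) * r) ⁻¹' Gs with hG₁_def
  have hG₁val : ∀ r ∈ G₁, S - 258 ≤ g r := by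
    intro r hr
    have hp : q/2 + (1/2) * r ∈ Gs := hr.2
    have hpAt : q/2 + (1/2) * r ∈ At := hGsAt hp
    have hpE : q/2 + (1/2) * r ∈ E := hAtE hpAt
    have hpg : S - 128 ≤ g (q/2 + (1/2) * r) := hp.2
    have hmid : (q + r)/2 = q/2 + (1/2) * r := by ring
    have hrel2 := hrel q r hqE hr.1.1 (by rw [hmid]; exact hpE)
    rw [hmid] at hrel2
    have h0 := abs_le.1 hrel2
    linarith [h0.1, h0.2]
  have hTG₁ : volume (T \ G₁) ≤ ENNReal.ofReal (5*ε + 1/32) := by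
    have hsub : T \ G₁ ⊆ D ∪ (fun r => q/2 + (1/2) * r) ⁻¹' (J \ Gs) := by
      intro r hr
      by_cases hrE : r ∈ E
      · right
        rw [mem_preimage]
        have hqQ' := hqQ
        rw [hQ_def, mem_Icc, hqlo_def, hqhi_def] at hqQ'
        have hrT := hr.1
        rw [hT_def, mem_Icc] at hrT
        refine ⟨?_, ?_⟩
        · rw [hJ_def, mem_Icc]
          constructor <;> linarith [hqQ'.1, hqQ'.2, hrT.1, hrT.2]
        · intro hmem
          exact hr.2 ⟨⟨hrE, hr.1⟩, hmem⟩
      · left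
        exact ⟨hT01 hr.1, hrE⟩
    calc volume (T \ G₁) ≤ volume (D ∪ (fun r => q/2 + (1/2) * r) ⁻¹' (J \ Gs)) :=
        measure_mono hsub
    _ ≤ volume D + volume ((fun r => q/2 + (1/2) * r) ⁻¹' (J \ Gs)) := measure_union_le _ _
    _ = volume D + ENNReal.ofReal |((1:ℝ)/2)⁻¹| * volume (J \ Gs) := by
        rw [vol_preimage_aff _ _ (by norm_num)]
    _ ≤ ENNReal.ofReal ε + ENNReal.ofReal 2 * ENNReal.ofReal (2*ε + 1/64) := by
        rw [show |((1:ℝ)/2)⁻¹| = (2:ℝ) by norm_num]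
        exact add_le_add hD (mul_le_mul_right hJGs _)
    _ = ENNReal.ofReal (5*ε + 1/32) := by
        rw [← ENNReal.ofReal_mul (by norm_num), ← ENNReal.ofReal_add hε0 (by positivity)]
        ring_nf
  -- pairing across 1/2
  have hσT : (fun r : ℝ => 1 + (-1) * r) ⁻¹' T = T := by
    ext r
    rw [mem_preimage, hT_def, mem_Icc, mem_Icc]
    constructor <;> intro h <;> constructor <;> linarith [h.1, h.2]
  have hpair : ∃ r, r ∈ G₁ ∧ (1 + (-1) * r) ∈ G₁ := by
    by_contra hcon
    push_neg at hcon
    have hsub : T ⊆ (T \ G₁) ∪ (fun r : ℝ => 1 + (-1) * r) ⁻¹' (T \ G₁) := by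
      intro r hr
      by_cases h1 : r ∈ G₁
      · right
        rw [mem_preimage]
        refine ⟨?_, hcon r h1⟩
        have hrT := hr
        rw [hT_def, mem_Icc] at hrT ⊢
        constructor <;> linarith [hrT.1, hrT.2]
      · left
        exact ⟨hr, h1⟩
    have h0 : volume T ≤ ENNReal.ofReal (5*ε + 1/32) + ENNReal.ofReal (5*ε + 1/32) := by
      calc volume T ≤ volume ((T \ G₁) ∪ (fun r : ℝ => 1 + (-1) * r) ⁻¹' (T \ G₁)) :=
          measure_mono hsub
      _ ≤ volume (T \ G₁) + volume ((fun r : ℝ => 1 + (-1) * r) ⁻¹' (T \ G₁)) :=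
          measure_union_le _ _
      _ ≤ ENNReal.ofReal (5*ε + 1/32) + ENNReal.ofReal (5*ε + 1/32) := by
          apply add_le_add hTG₁
          rw [vol_preimage_aff _ _ (by norm_num : ((-1:ℝ)) ≠ 0)]
          rw [show |(-1:ℝ)⁻¹| = (1:ℝ) by norm_num, ENNReal.ofReal_one, one_mul]
          exact hTG₁
    have hvT : volume T = ENNReal.ofReal (1/8) := by
      rw [hT_def, Real.volume_Icc]
      norm_num
    rw [hvT, ← ENNReal.ofReal_add (by positivity) (by positivity)] at h0
    rw [ENNReal.ofReal_le_ofReal_iff (by positivity)] at h0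
    linarith
  obtain ⟨r, hr1, hr2⟩ := hpair
  have hrE : r ∈ E := hr1.1.1
  have hrE' : (1 + (-1) * r) ∈ E := hr2.1.1
  have hv1 : S - 258 ≤ g r := hG₁val r hr1
  have hv2 : S - 258 ≤ g (1 + (-1) * r) := hG₁val _ hr2
  have hmid : (r + (1 + (-1) * r))/2 = 1/2 := by ring
  have hrel3 := hrel r (1 + (-1) * r) hrE hrE' (by rw [hmid]; exact hc)
  rw [hmid] at hrel3
  have h0 := abs_le.1 hrel3
  linarith [h0.1, h0.2]

end Inner

section Sup

lemma supBound (E : Set ℝ) (g : ℝ → ℝ) (ε N S m : ℝ)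
    (hE : MeasurableSet E) (hE1 : E ⊆ Icc 0 1)
    (h0 : (0:ℝ) ∈ E) (h1 : (1:ℝ) ∈ E) (hc : (1/2:ℝ) ∈ E)
    (hε0 : 0 ≤ ε) (hε : ε ≤ 1/1024)
    (hD : volume (Icc (0:ℝ) 1 \ E) ≤ ENNReal.ofReal ε)
    (hvol : ENNReal.ofReal (1 - ε) ≤ volume E)
    (hg : Measurable g)
    (hNb : ∀ x ∈ E, |g x| ≤ N)
    (hrel : ∀ a b, a ∈ E → b ∈ E → (a+b)/2 ∈ E → |g a + g b - 2 * g ((a+b)/2)| ≤ 2)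
    (hg0 : g 0 = 0) (hg1 : g 1 = 0) (hgc : g (1/2) ≤ 1)
    (hS : ∀ x ∈ E, g x ≤ S) (hm : ∀ x ∈ E, m ≤ g x) (hS0 : 0 ≤ S) (hm0 : m ≤ 0)
    (x₀ : ℝ) (hx₀ : x₀ ∈ E) (hx₀S : S - 1 ≤ g x₀) :
    S ≤ 260 ∨ S ≤ 5 + 14*ε*N + (5/16)*(S - m) := by
  have hEne : volume E ≠ ⊤ := by
    have h0' : volume E ≤ volume (Icc (0:ℝ) 1) := measure_mono hE1
    rw [Real.volume_Icc] at h0'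
    exact (lt_of_le_of_lt h0' ENNReal.ofReal_lt_top).ne
  have hintE : IntegrableOn g E volume := intOnBdd hEne hg hNb hE
  have hx01 := mem_Icc.1 (hE1 hx₀)
  have hSm : 0 ≤ S - m := by linarith
  rcases le_or_gt (5/32) (min x₀ (1 - x₀)) with hcase | hcase
  · exact Or.inl (innerLemma E g ε N S hE hE1 hc hε0 hε hD hg hNb hrel hgc hS hintE
      x₀ hx₀ hx₀S hcase)
  · right
    have hstar := starLemma E g ε N hE hE1 hε0 (le_trans hε (by norm_num)) hD hvol hg hNb hrel
    have h₀ := abs_le.1 (hstar x₀ hx₀)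
    rcases le_total x₀ (1/2) with hhalf | hhalf
    · have hd : x₀ < 5/32 := by
        rw [min_eq_left (by linarith)] at hcase; exact hcase
      have he := abs_le.1 (hstar 0 h0)
      have hcmp := abs_le.1 (cmpLemma E g S m hE hE1 hintE hS hm hS0 hm0 0 x₀ (by linarith [hx01.1]))
      rw [hg0] at he
      have hd2 : 4 * ((x₀ - 0)/2 * (S - m)) ≤ (5/16)*(S-m) := by nlinarith
      linarith [h₀.1, h₀.2, he.1, he.2, hcmp.1, hcmp.2]
    · have hd : 1 - x₀ < 5/32 := by
        rw [min_eq_right (by linarith)] at hcase; exact hcase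
      have he := abs_le.1 (hstar 1 h1)
      have hcmp := abs_le.1 (cmpLemma E g S m hE hE1 hintE hS hm hS0 hm0 x₀ 1 (by linarith [hx01.2]))
      rw [hg1] at he
      have hd2 : 4 * ((1 - x₀)/2 * (S - m)) ≤ (5/16)*(S-m) := by nlinarith
      linarith [h₀.1, h₀.2, he.1, he.2, hcmp.1, hcmp.2]

lemma keyLemma (E : Set ℝ) (g : ℝ → ℝ) (ε C : ℝ)
    (hE : MeasurableSet E) (hE1 : E ⊆ Icc 0 1)
    (h0 : (0:ℝ) ∈ E) (h1 : (1:ℝ) ∈ E) (hc : (1/2:ℝ) ∈ E)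
    (hε0 : 0 ≤ ε) (hε : ε ≤ 1/1024)
    (hvol : ENNReal.ofReal (1 - ε) ≤ volume E)
    (hg : Measurable g)
    (hbd : ∀ x ∈ E, |g x| ≤ C)
    (hrel : ∀ a b, a ∈ E → b ∈ E → (a+b)/2 ∈ E → |g a + g b - 2 * g ((a+b)/2)| ≤ 2)
    (hg0 : g 0 = 0) (hg1 : g 1 = 0) :
    ∀ x ∈ E, |g x| ≤ 260 := by
  -- leftover measure bound
  have hEfin' : volume E ≠ ⊤ := by
    have h0' : volume E ≤ volume (Icc (0:ℝ) 1) := measure_mono hE1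
    rw [Real.volume_Icc] at h0'
    exact (lt_of_le_of_lt h0' ENNReal.ofReal_lt_top).ne
  have hD : volume (Icc (0:ℝ) 1 \ E) ≤ ENNReal.ofReal ε := by
    have hsplit : volume E + volume (Icc (0:ℝ) 1 \ E) = volume (Icc (0:ℝ) 1) := by
      rw [measure_add_diff hE.nullMeasurableSet, union_eq_self_of_subset_left hE1]
    have hd : volume (Icc (0:ℝ) 1 \ E) = volume (Icc (0:ℝ) 1) - volume E := by
      apply ENNReal.eq_sub_of_add_eq hEfin'
      rw [add_comm] at hsplit
      exact hsplit
    rw [hd, Real.volume_Icc, show (1:ℝ) - 0 = 1 by norm_num]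
    calc ENNReal.ofReal 1 - volume E ≤ ENNReal.ofReal 1 - ENNReal.ofReal (1 - ε) :=
          tsub_le_tsub_left hvol _
    _ = ENNReal.ofReal (1 - (1 - ε)) := (ENNReal.ofReal_sub _ (by linarith)).symm
    _ = ENNReal.ofReal ε := by norm_num
  -- suprema
  have hne : (g '' E).Nonempty := ⟨g 0, 0, h0, rfl⟩
  have hne2 : ((fun x => -g x) '' E).Nonempty := ⟨-g 0, 0, h0, rfl⟩
  have hbdd : BddAbove (g '' E) := by
    refine ⟨C, ?_⟩
    rintro _ ⟨x, hx, rfl⟩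
    exact le_trans (le_abs_self _) (hbd x hx)
  have hbdd2 : BddAbove ((fun x => -g x) '' E) := by
    refine ⟨C, ?_⟩
    rintro _ ⟨x, hx, rfl⟩
    exact le_trans (le_trans (le_abs_self _) (le_of_eq (abs_neg _))) (hbd x hx)
  set S : ℝ := sSup (g '' E) with hS_def
  set S2 : ℝ := sSup ((fun x => -g x) '' E) with hS2_def
  have hS : ∀ x ∈ E, g x ≤ S := fun x hx => le_csSup hbdd ⟨x, hx, rfl⟩
  have hS2 : ∀ x ∈ E, -g x ≤ S2 := fun x hx => le_csSup hbdd2 ⟨x, hx, rfl⟩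
  have hS0 : 0 ≤ S := by
    have := hS 0 h0
    rw [hg0] at this
    calc (0:ℝ) = g 0 := hg0.symm
    _ ≤ S := hS 0 h0
  have hS20 : 0 ≤ S2 := by
    calc (0:ℝ) = -g 0 := by rw [hg0]; ring
    _ ≤ S2 := hS2 0 h0
  set N : ℝ := max S S2 with hN_def
  have hNb : ∀ x ∈ E, |g x| ≤ N := by
    intro x hx
    rw [abs_le]
    constructor
    · have := hS2 x hx
      have h2 : S2 ≤ N := le_max_right _ _
      linarith
    · exact le_trans (hS x hx) (le_max_left _ _)
  have hNb2 : ∀ x ∈ E, |-g x| ≤ N := by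
    intro x hx
    rw [abs_neg]
    exact hNb x hx
  have hrel2 : ∀ a b, a ∈ E → b ∈ E → (a+b)/2 ∈ E →
      |(-g a) + (-g b) - 2 * (-g ((a+b)/2))| ≤ 2 := by
    intro a b ha hb hab
    have := hrel a b ha hb hab
    calc |(-g a) + (-g b) - 2 * (-g ((a+b)/2))| = |-(g a + g b - 2 * g ((a+b)/2))| := by ring_nf
    _ = |g a + g b - 2 * g ((a+b)/2)| := abs_neg _
    _ ≤ 2 := this
  have hgc : |g (1/2)| ≤ 1 := by
    have h := hrel 0 1 h0 h1 (by norm_num; exact hc)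
    rw [hg0, hg1] at h
    rw [show ((0:ℝ)+1)/2 = 1/2 by norm_num] at h
    rw [show (0:ℝ) + 0 - 2 * g (1/2) = -(2 * g (1/2)) by ring, abs_neg, abs_mul, abs_two] at h
    linarith
  -- near-sup points
  obtain ⟨y₀, hy₀mem, hy₀⟩ : ∃ y ∈ g '' E, S - 1 < y :=
    exists_lt_of_lt_csSup hne (by linarith)
  obtain ⟨x₀, hx₀, rfl⟩ := hy₀mem
  obtain ⟨y₁, hy₁mem, hy₁⟩ : ∃ y ∈ (fun x => -g x) '' E, S2 - 1 < y :=
    exists_lt_of_lt_csSup hne2 (by linarith)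
  obtain ⟨x₁, hx₁, rfl⟩ := hy₁mem
  have hy₁' : S2 - 1 < -g x₁ := hy₁
  -- apply supBound to g and -g
  have Hg := supBound E g ε N S (-S2) hE hE1 h0 h1 hc hε0 hε hD hvol hg hNb hrel hg0 hg1
    (by linarith [abs_le.1 hgc])
    hS (fun x hx => by linarith [hS2 x hx]) hS0 (by linarith)
    x₀ hx₀ (by linarith)
  have Hg2 := supBound E (fun x => -g x) ε N S2 (-S) hE hE1 h0 h1 hc hε0 hε hD hvol hg.neg
    hNb2 hrel2 (by show -g 0 = 0; rw [hg0]; ring) (by show -g 1 = 0; rw [hg1]; ring)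
    (by show -g (1/2) ≤ 1; linarith [abs_le.1 hgc])
    hS2 (fun x hx => by show -S ≤ -g x; linarith [hS x hx]) hS20 (by linarith)
    x₁ hx₁ (by show S2 - 1 ≤ -g x₁; linarith [hy₁'])
  -- combine
  have hNle : N ≤ S + S2 := by
    rw [hN_def]
    rcases max_cases S S2 with ⟨h, _⟩ | ⟨h, _⟩ <;> rw [h] <;> linarith
  have hεN : ε * N ≤ (1/1024) * (S + S2) := by
    apply mul_le_mul hε hNle (le_trans hS0 (le_max_left S S2)) (by norm_num)
  have hfin : S ≤ 260 ∧ S2 ≤ 260 := by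
    have e1 : S - (-S2) = S + S2 := by ring
    have e2 : S2 - (-S) = S + S2 := by ring
    rw [e1] at Hg
    rw [e2] at Hg2
    rcases Hg with h | h <;> rcases Hg2 with h2 | h2
    · exact ⟨h, h2⟩
    · constructor
      · exact h
      · nlinarith
    · constructor
      · nlinarith
      · exact h2
    · constructor <;> nlinarith
  intro x hx
  rw [abs_le]
  constructor
  · have := hS2 x hx
    linarith [hfin.2]
  · linarith [hS x hx, hfin.1]

end Sup

theorem almost_affine_boundedness_endpoints :
    ∃ ε₀ > (0 : ℝ), ∃ M > (0 : ℝ),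
      ∀ (m₁ m₂ ε K : ℝ) (E : Set ℝ) (f : ℝ → ℝ),
        MeasurableSet E → E ⊆ Set.Icc m₁ m₂ →
        m₁ ∈ E → m₂ ∈ E → (m₁ + m₂) / 2 ∈ E →
        0 ≤ ε → ε ≤ ε₀ →
        ENNReal.ofReal ((1 - ε) * (m₂ - m₁)) ≤ volume E →
        Measurable f → (∃ C : ℝ, ∀ x ∈ E, |f x| ≤ C) →
        (∀ m' m'', m' ∈ E → m'' ∈ E → (m' + m'') / 2 ∈ E →
          |(f m' + f m'') / 2 - f ((m' + m'') / 2)| ≤ 1) →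
        |f m₁| + |f m₂| ≤ K →
        ∀ x ∈ E, |f x| ≤ K + M := by
  refine ⟨1/1024, by norm_num, 260, by norm_num, ?_⟩
  intro m₁ m₂ ε K E f hE hEsub hm₁ hm₂ hmid hε0 hεε₀ hvol hf hCex hrelf hK x hx
  obtain ⟨C, hC⟩ := hCex
  have hm12 : m₁ ≤ m₂ := (mem_Icc.1 (hEsub hm₁)).2
  rcases eq_or_lt_of_le hm12 with heq | hL
  · -- degenerate
    have hxe : x = m₁ := by
      have := mem_Icc.1 (hEsub hx)
      rw [← heq] at this
      linarith [this.1, this.2]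
    rw [hxe]
    have h1 : |f m₁| ≤ K := by
      have := abs_nonneg (f m₂)
      linarith
    linarith
  · set L : ℝ := m₂ - m₁ with hL_def
    have hLpos : 0 < L := by rw [hL_def]; linarith
    set τ : ℝ → ℝ := fun t => m₁ + L * t with hτ_def
    set E' : Set ℝ := τ ⁻¹' E with hE'_def
    set g : ℝ → ℝ := fun t => f (τ t) - ((1 - t) * f m₁ + t * f m₂) with hg_def
    have hτm : Measurable τ := by fun_prop
    have hE' : MeasurableSet E' := hτm hE
    have hE1' : E' ⊆ Icc 0 1 := by
      intro t ht
      have h0 := mem_Icc.1 (hEsub ht)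
      simp only [hτ_def] at h0
      rw [mem_Icc]
      constructor
      · by_contra hcon
        push_neg at hcon
        nlinarith [h0.1, h0.2]
      · by_contra hcon
        push_neg at hcon
        nlinarith [h0.1, h0.2]
    have h0' : (0:ℝ) ∈ E' := by
      show τ 0 ∈ E
      rw [show τ 0 = m₁ by rw [hτ_def]; ring]
      exact hm₁
    have h1' : (1:ℝ) ∈ E' := by
      show τ 1 ∈ E
      rw [show τ 1 = m₂ by rw [hτ_def, hL_def]; ring]
      exact hm₂
    have hc' : (1/2:ℝ) ∈ E' := by
      show τ (1/2) ∈ E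
      rw [show τ (1/2) = (m₁ + m₂)/2 by rw [hτ_def, hL_def]; ring]
      exact hmid
    have hvol' : ENNReal.ofReal (1 - ε) ≤ volume E' := by
      have h0 : volume E' = ENNReal.ofReal |L⁻¹| * volume E := by
        rw [hE'_def, hτ_def]
        exact vol_preimage_aff m₁ L (ne_of_gt hLpos) E
      rw [h0]
      calc ENNReal.ofReal (1 - ε) = ENNReal.ofReal (L⁻¹ * ((1-ε) * L)) := by
            congr 1
            field_simp
      _ = ENNReal.ofReal (L⁻¹) * ENNReal.ofReal ((1-ε)*L) := ENNReal.ofReal_mul (by positivity)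
      _ ≤ ENNReal.ofReal (L⁻¹) * volume E := mul_le_mul_right hvol _
      _ = ENNReal.ofReal |L⁻¹| * volume E := by rw [abs_of_pos (by positivity)]
    have hgm : Measurable g := by
      apply Measurable.sub
      · exact hf.comp hτm
      · fun_prop
    have hbd' : ∀ t ∈ E', |g t| ≤ C + (|f m₁| + |f m₂|) := by
      intro t ht
      have ht01 := mem_Icc.1 (hE1' ht)
      have h1 : |f (τ t)| ≤ C := hC (τ t) ht
      have h2 : |(1 - t) * f m₁ + t * f m₂| ≤ |f m₁| + |f m₂| := by
        calc |(1 - t) * f m₁ + t * f m₂| ≤ |(1-t) * f m₁| + |t * f m₂| := abs_add_le _ _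
        _ = |1-t| * |f m₁| + |t| * |f m₂| := by rw [abs_mul, abs_mul]
        _ ≤ 1 * |f m₁| + 1 * |f m₂| := by
            apply add_le_add
            · apply mul_le_mul_of_nonneg_right _ (abs_nonneg _)
              rw [abs_le]; constructor <;> linarith [ht01.1, ht01.2]
            · apply mul_le_mul_of_nonneg_right _ (abs_nonneg _)
              rw [abs_le]; constructor <;> linarith [ht01.1, ht01.2]
        _ = |f m₁| + |f m₂| := by ring
      calc |g t| ≤ |f (τ t)| + |(1 - t) * f m₁ + t * f m₂| := abs_sub _ _
      _ ≤ C + (|f m₁| + |f m₂|) := add_le_add h1 h2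
    have hrel' : ∀ a b, a ∈ E' → b ∈ E' → (a+b)/2 ∈ E' →
        |g a + g b - 2 * g ((a+b)/2)| ≤ 2 := by
      intro a b ha hb hab
      have hτmid : τ ((a+b)/2) = (τ a + τ b)/2 := by rw [hτ_def]; ring
      have hmem : (τ a + τ b)/2 ∈ E := by rw [← hτmid]; exact hab
      have h0 := hrelf (τ a) (τ b) ha hb hmem
      have h1 := abs_le.1 h0
      have heq : g a + g b - 2 * g ((a+b)/2)
          = f (τ a) + f (τ b) - 2 * f ((τ a + τ b)/2) := by
        rw [hg_def]
        simp only []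
        rw [hτmid]
        ring
      rw [heq, abs_le]
      constructor <;> linarith [h1.1, h1.2]
    have hg0' : g 0 = 0 := by
      rw [hg_def]
      simp only []
      rw [show τ 0 = m₁ by rw [hτ_def]; ring]
      ring
    have hg1' : g 1 = 0 := by
      rw [hg_def]
      simp only []
      rw [show τ 1 = m₂ by rw [hτ_def, hL_def]; ring]
      ring
    have hkey := keyLemma E' g ε (C + (|f m₁| + |f m₂|)) hE' hE1' h0' h1' hc' hε0 hεε₀ hvol'
      hgm hbd' hrel' hg0' hg1'
    -- conclude
    set t : ℝ := (x - m₁)/L with ht_def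
    have hτt : τ t = x := by
      rw [hτ_def, ht_def]
      field_simp
      ring
    have htE' : t ∈ E' := by
      show τ t ∈ E
      rw [hτt]
      exact hx
    have ht01 := mem_Icc.1 (hE1' htE')
    have hgt := hkey t htE'
    have h2 : |(1 - t) * f m₁ + t * f m₂| ≤ K := by
      calc |(1 - t) * f m₁ + t * f m₂| ≤ |(1-t) * f m₁| + |t * f m₂| := abs_add_le _ _
      _ = |1-t| * |f m₁| + |t| * |f m₂| := by rw [abs_mul, abs_mul]
      _ ≤ 1 * |f m₁| + 1 * |f m₂| := by
          apply add_le_add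
          · apply mul_le_mul_of_nonneg_right _ (abs_nonneg _)
            rw [abs_le]; constructor <;> linarith [ht01.1, ht01.2]
          · apply mul_le_mul_of_nonneg_right _ (abs_nonneg _)
            rw [abs_le]; constructor <;> linarith [ht01.1, ht01.2]
      _ ≤ K := by linarith
    have hfx : f x = g t + ((1 - t) * f m₁ + t * f m₂) := by
      rw [hg_def]
      simp only []
      rw [hτt]
      ring
    rw [hfx]
    calc |g t + ((1 - t) * f m₁ + t * f m₂)| ≤ |g t| + |(1 - t) * f m₁ + t * f m₂| := abs_add_le _ _
    _ ≤ 260 + K := add_le_add hgt h2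
    _ = K + 260 := by ring
end
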